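/- arXiv:2007.15253 — 10 statements merged into one kernel-verified Lean document; each statement's English description precedes it below -/
import Mathlib

section
/- Let q be a prime power, ℓ ≥ 1, and let F = F_{q^ℓ} with subfield F_q. Let A ⊆ F with |A| = n, let α* ∈ A, and let r ≥ 1. Suppose g_1, …, g_ℓ ∈ F[X] are polynomials, each of degree at most r − 1, such that g_1(α*), …, g_ℓ(α*) span F as an F_q-vector space. For each α ∈ A set b_α := dim_{F_q} span_{F_q}{g_1(α), …, g_ℓ(α)}. Then ∑_{α ∈ A \ {α*}} q^{−b_α} ≤ ((r − 1)(q^ℓ − 1) + (n − 1)) / q^ℓ. -/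
/-!
Count the pairs `(α, c)` with `α ∈ A \ {α*}`, `c ∈ F_q^ℓ` and `∑ cᵢ gᵢ(α) = 0`. For fixed `α` the
solutions `c` form the kernel of `c ↦ ∑ cᵢ gᵢ(α)`, of size `q^(ℓ - b_α)`. For fixed `c ≠ 0` the
polynomial `∑ cᵢ gᵢ` is nonzero, because the `gᵢ(α*)` are independent over `F_q`, and has degree
at most `r - 1`, hence at most `r - 1` roots; `c = 0` contributes `n - 1`. Dividing by `q^ℓ`
gives the bound.
-/

open scoped Classical

open Finset Polynomial Module

theorem card_filter_isRoot_le_natDegree {R : Type*} [CommRing R] [IsDomain R] {p : R[X]}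
    (hp : p ≠ 0) (s : Finset R) : #{x ∈ s | p.IsRoot x} ≤ p.natDegree :=
  card_le_degree_of_subset_roots fun x hx => by
    rw [mem_roots hp]
    exact (mem_filter.1 hx).2

section Counting

variable {K : Type*} [Field K] [Fintype K] {ι : Type*} [Fintype ι]

theorem card_linearCombination_eq_zero_mul_pow_finrank_span
    {V : Type*} [AddCommGroup V] [Module K V] (v : ι → V) :
    #{c : ι → K | ∑ i, c i • v i = 0} * Fintype.card K ^ finrank K (Submodule.span K (Set.range v))
      = Fintype.card K ^ Fintype.card ι := by
  let f := Fintype.linearCombination K v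
  have hker : #{c : ι → K | ∑ i, c i • v i = 0} = Fintype.card K ^ finrank K (LinearMap.ker f) := by
    rw [← Module.card_eq_pow_finrank, ← Fintype.card_subtype]
    exact Fintype.card_congr (Equiv.subtypeEquivRight fun c => by
      simp [f, Fintype.linearCombination_apply])
  rw [hker, ← Fintype.range_linearCombination, ← pow_add, add_comm,
    LinearMap.finrank_range_add_finrank_ker, finrank_fintype_fun_eq_card]

variable {F : Type*} [Field F] [Algebra K F]

theorem sum_card_linearCombination_eval_eq_zero_le (g : ι → F[X]) {d : ℕ}
    (hdeg : ∀ i, (g i).natDegree ≤ d) {α₀ : F}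
    (hli : LinearIndependent K fun i => (g i).eval α₀) (s : Finset F) :
    ∑ α ∈ s, #{c : ι → K | ∑ i, c i • (g i).eval α = 0}
      ≤ (Fintype.card K ^ Fintype.card ι - 1) * d + #s := by
  have hroots : ∀ c : ι → K, c ≠ 0 → #{α ∈ s | ∑ i, c i • (g i).eval α = 0} ≤ d := by
    intro c hc
    have heval : ∀ α, (∑ i, c i • g i).eval α = ∑ i, c i • (g i).eval α := by
      simp [eval_finsetSum, eval_smul]
    have hne : ∑ i, c i • g i ≠ 0 := fun h0 =>
      hc (funext (Fintype.linearIndependent_iff.1 hli c (by rw [← heval, h0, eval_zero])))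
    calc #{α ∈ s | ∑ i, c i • (g i).eval α = 0}
        = #{α ∈ s | (∑ i, c i • g i).IsRoot α} := by simp only [IsRoot, heval]
      _ ≤ (∑ i, c i • g i).natDegree := card_filter_isRoot_le_natDegree hne s
      _ ≤ d := natDegree_sum_le_of_forall_le _ _ fun i _ => (natDegree_smul_le _ _).trans (hdeg i)
  calc ∑ α ∈ s, #{c : ι → K | ∑ i, c i • (g i).eval α = 0}
      = ∑ c : ι → K, #{α ∈ s | ∑ i, c i • (g i).eval α = 0} :=
        sum_card_bipartiteAbove_eq_sum_card_bipartiteBelow _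
    _ = ∑ c ∈ univ.erase (0 : ι → K), #{α ∈ s | ∑ i, c i • (g i).eval α = 0} + #s := by
        rw [← sum_erase_add _ _ (mem_univ 0)]
        simp
    _ ≤ #(univ.erase (0 : ι → K)) * d + #s := by
        rw [← smul_eq_mul]
        gcongr
        exact sum_le_card_nsmul _ _ _ fun c hc => hroots c (ne_of_mem_erase hc)
    _ = (Fintype.card K ^ Fintype.card ι - 1) * d + #s := by
        rw [card_erase_of_mem (mem_univ _), card_univ, Fintype.card_fun]

theorem sum_zpow_neg_finrank_span_eval_le (g : ι → F[X]) {d : ℕ}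
    (hdeg : ∀ i, (g i).natDegree ≤ d) {α₀ : F}
    (hli : LinearIndependent K fun i => (g i).eval α₀) (s : Finset F) :
    ∑ α ∈ s, (Fintype.card K : ℝ) ^
        (-(finrank K (Submodule.span K (Set.range fun i => (g i).eval α)) : ℤ))
      ≤ (((Fintype.card K ^ Fintype.card ι - 1) * d + #s : ℕ) : ℝ) /
        (Fintype.card K : ℝ) ^ Fintype.card ι := by
  have hterm : ∀ α : F, (Fintype.card K : ℝ) ^
      (-(finrank K (Submodule.span K (Set.range fun i => (g i).eval α)) : ℤ))
        = (#{c : ι → K | ∑ i, c i • (g i).eval α = 0} : ℝ) /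
          (Fintype.card K : ℝ) ^ Fintype.card ι := by
    intro α
    have hcount := congrArg (Nat.cast (R := ℝ))
      (card_linearCombination_eq_zero_mul_pow_finrank_span (K := K) fun i => (g i).eval α)
    rw [Nat.cast_mul, Nat.cast_pow, Nat.cast_pow] at hcount
    rw [eq_div_iff (by positivity), ← hcount, zpow_neg, zpow_natCast, mul_comm,
      mul_inv_cancel_right₀ (by positivity)]
  simp_rw [hterm, ← sum_div]
  gcongr
  exact_mod_cast sum_card_linearCombination_eval_eq_zero_le g hdeg hli s

end Counting

theorem statement0_general {K F : Type*} [Field K] [Field F] [Fintype K] [Algebra K F]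
    (q ℓ n r : ℕ) (hq : Fintype.card K = q) (hℓ : Module.finrank K F = ℓ)
    (hr : 1 ≤ r)
    (A : Finset F) (hA : A.card = n) (αs : F) (hαs : αs ∈ A)
    (g : Fin ℓ → Polynomial F) (hdeg : ∀ i, (g i).natDegree ≤ r - 1)
    (hspan : Submodule.span K (Set.range fun i => (g i).eval αs) = ⊤)
    (b : F → ℕ)
    (hb : ∀ α : F, b α = Module.finrank K
      (Submodule.span K (Set.range fun i => (g i).eval α))) :
    ∑ α ∈ A.erase αs, ((q : ℝ)) ^ (-(b α : ℤ)) ≤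
      (((r : ℝ) - 1) * ((q : ℝ) ^ ℓ - 1) + ((n : ℝ) - 1)) / (q : ℝ) ^ ℓ := by
  subst hq
  have hli : LinearIndependent K fun i => (g i).eval αs :=
    linearIndependent_of_top_le_span_of_card_eq_finrank hspan.ge (by rw [Fintype.card_fin, hℓ])
  have hbound := sum_zpow_neg_finrank_span_eval_le g hdeg hli (A.erase αs)
  simp_rw [← hb, Fintype.card_fin, card_erase_of_mem hαs, hA] at hbound
  refine hbound.trans_eq ?_
  have hn : 1 ≤ n := hA ▸ card_pos.2 ⟨αs, hαs⟩
  have hqℓ : 1 ≤ Fintype.card K ^ ℓ := Nat.one_le_pow _ _ Fintype.card_pos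
  push_cast [Nat.cast_sub hqℓ, Nat.cast_sub hr, Nat.cast_sub hn]
  ring

/-- If `g₁, …, g_ℓ` are polynomials over `F = F_{q^ℓ}` of degree at most `r − 1` whose
evaluations at `α* ∈ A` span `F` over the subfield `K = F_q`, then with
`b_α := dim_K span_K {g_i(α)}`, one has
`∑_{α ∈ A \ {α*}} q^{−b_α} ≤ ((r − 1)(q^ℓ − 1) + (n − 1)) / q^ℓ`. -/
theorem statement0 {K F : Type*} [Field K] [Field F] [Fintype K] [Fintype F] [Algebra K F]
    (q ℓ n r : ℕ) (hq : Fintype.card K = q) (hℓ : Module.finrank K F = ℓ) (hℓ1 : 1 ≤ ℓ)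
    (hr : 1 ≤ r)
    (A : Finset F) (hA : A.card = n) (αs : F) (hαs : αs ∈ A)
    (g : Fin ℓ → Polynomial F) (hdeg : ∀ i, (g i).natDegree ≤ r - 1)
    (hspan : Submodule.span K (Set.range fun i => (g i).eval αs) = ⊤)
    (b : F → ℕ)
    (hb : ∀ α : F, b α = Module.finrank K
      (Submodule.span K (Set.range fun i => (g i).eval α))) :
    ∑ α ∈ A.erase αs, ((q : ℝ)) ^ (-(b α : ℤ)) ≤
      (((r : ℝ) - 1) * ((q : ℝ) ^ ℓ - 1) + ((n : ℝ) - 1)) / (q : ℝ) ^ ℓ :=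
  statement0_general q ℓ n r hq hℓ hr A hA αs hαs g hdeg hspan b hb
end

section
/- Let q ≥ 2 and ℓ ≥ 1 be integers and let n, r be integers with 1 ≤ r ≤ n ≤ q^ℓ and n ≥ 2. Set T := ((r − 1)(q^ℓ − 1) + (n − 1)) / q^ℓ and b_AVE := log_q((n − 1)/T). Define t := n − 1 if b_AVE is an integer, and t := ⌊(T − (n − 1)·q^{−⌈b_AVE⌉}) / (q^{−⌊b_AVE⌋} − q^{−⌈b_AVE⌉})⌋ otherwise. Then for every tuple of integers b_1, …, b_{n−1} with 0 ≤ b_i ≤ ℓ for all i and ∑_{i=1}^{n−1} q^{−b_i} ≤ T, one has ∑_{i=1}^{n−1} b_i ≥ t·⌊b_AVE⌋ + (n − 1 − t)·⌈b_AVE⌉. -/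
open scoped Classical

lemma bern_zpow (x : ℝ) (hx : 2 ≤ x) (k : ℤ) : 1 + (k:ℝ)*(x-1) ≤ x^k := by
  rcases k with m | m
  · have h := one_add_mul_le_pow (by linarith : (-2:ℝ) ≤ x-1) m
    simpa using h
  · have hxpos : (0:ℝ) < x := by linarith
    have h1 : (0:ℝ) < x ^ (Int.negSucc m) := zpow_pos hxpos _
    have h2 : ((Int.negSucc m : ℤ) : ℝ) = -((m:ℝ)+1) := by
      simp [Int.negSucc_eq]
    rw [h2]
    have hm : (0:ℝ) ≤ (m:ℝ) := Nat.cast_nonneg m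
    nlinarith

lemma bern_zpow' (x : ℝ) (hx : 2 ≤ x) (k : ℤ) : 1 + (k:ℝ) ≤ x^k := by
  rcases le_or_gt 0 k with hk | hk
  · have h := bern_zpow x hx k
    have hk' : (0:ℝ) ≤ (k:ℝ) := by exact_mod_cast hk
    nlinarith
  · have h1 : (0:ℝ) < x^k := zpow_pos (by linarith) _
    have hk' : (k:ℝ) ≤ -1 := by
      have : k ≤ -1 := by omega
      exact_mod_cast this
    linarith


/-- The integral lower bound on the repair bandwidth: any integer tuple
`b₁, …, b_{n−1}` with `0 ≤ bᵢ ≤ ℓ` and `∑ q^{−bᵢ} ≤ T` satisfies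
`∑ bᵢ ≥ t⌊b_AVE⌋ + (n − 1 − t)⌈b_AVE⌉`. -/
theorem statement1 (q ℓ n r : ℕ) (hq : 2 ≤ q) (hℓ : 1 ≤ ℓ) (hr : 1 ≤ r) (hrn : r ≤ n)
    (hn : n ≤ q ^ ℓ) (hn2 : 2 ≤ n)
    (T bave : ℝ) (t : ℤ)
    (hT : T = (((r : ℝ) - 1) * ((q : ℝ) ^ ℓ - 1) + ((n : ℝ) - 1)) / (q : ℝ) ^ ℓ)
    (hbave : bave = Real.logb q (((n : ℝ) - 1) / T))
    (ht_int : (∃ z : ℤ, bave = (z : ℝ)) → t = (n : ℤ) - 1)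
    (ht_nonint : (¬ ∃ z : ℤ, bave = (z : ℝ)) →
      t = ⌊(T - ((n : ℝ) - 1) * (q : ℝ) ^ (-(⌈bave⌉ : ℤ))) /
            ((q : ℝ) ^ (-(⌊bave⌋ : ℤ)) - (q : ℝ) ^ (-(⌈bave⌉ : ℤ)))⌋)
    (b : Fin (n - 1) → ℕ) (hb : ∀ i, b i ≤ ℓ)
    (hsum : ∑ i, (q : ℝ) ^ (-(b i : ℤ)) ≤ T) :
    t * ⌊bave⌋ + ((n : ℤ) - 1 - t) * ⌈bave⌉ ≤ ∑ i, (b i : ℤ) := by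
  have hq2 : (2:ℝ) ≤ (q:ℝ) := by exact_mod_cast hq
  have hqpos : (0:ℝ) < q := by linarith
  have hq0 : (q:ℝ) ≠ 0 := ne_of_gt hqpos
  have hn1 : (2:ℝ) ≤ (n:ℝ) := by exact_mod_cast hn2
  have hr1 : (1:ℝ) ≤ (r:ℝ) := by exact_mod_cast hr
  have hql : (1:ℝ) ≤ (q:ℝ)^ℓ := one_le_pow₀ (by linarith)
  have hT0 : 0 < T := by
    rw [hT]
    apply div_pos _ (by linarith)
    nlinarith
  have hfrac : (0:ℝ) < ((n:ℝ)-1)/T := div_pos (by linarith) hT0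
  have hpow : (q:ℝ) ^ bave = ((n:ℝ)-1)/T := by
    rw [hbave]; exact Real.rpow_logb hqpos (by norm_num; linarith) hfrac
  have hcard : ((Finset.univ : Finset (Fin (n-1))).card : ℝ) = (n:ℝ) - 1 := by
    simp only [Finset.card_univ, Fintype.card_fin]
    have h1 : (1:ℕ) ≤ n := by omega
    push_cast [Nat.cast_sub h1]
    ring
  set M : ℝ := ∑ i, (b i : ℝ) with hM
  have hMsum : ((∑ i, (b i : ℤ) : ℤ) : ℝ) = M := by push_cast; rfl
  by_cases hint : ∃ z : ℤ, bave = (z : ℝ)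
  · -- integer case
    obtain ⟨z, hz⟩ := hint
    have ht : t = (n:ℤ) - 1 := ht_int ⟨z, hz⟩
    have hf : ⌊bave⌋ = z := by rw [hz]; exact Int.floor_intCast z
    have hc : ⌈bave⌉ = z := by rw [hz]; exact Int.ceil_intCast z
    have hqz : (q:ℝ) ^ bave = (q:ℝ) ^ z := by rw [hz, Real.rpow_intCast]
    have hzpos : (0:ℝ) < (q:ℝ)^z := zpow_pos hqpos z
    have hzpos' : (0:ℝ) < (q:ℝ)^(-z) := zpow_pos hqpos _
    have hTz : T * (q:ℝ)^z = (n:ℝ) - 1 := by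
      rw [hqz] at hpow
      field_simp at hpow
      linarith
    have hpt : ∀ i : Fin (n-1), (q:ℝ)^(-z) * (1 + ((z:ℝ) - (b i : ℝ))) ≤ (q:ℝ) ^ (-(b i : ℤ)) := by
      intro i
      have he : (q:ℝ)^(-(b i : ℤ)) = (q:ℝ)^(-z) * (q:ℝ)^(z - (b i : ℤ)) := by
        rw [← zpow_add₀ hq0]
        congr 1
        ring
      rw [he]
      apply mul_le_mul_of_nonneg_left _ (le_of_lt hzpos')
      have h := bern_zpow' (q:ℝ) hq2 (z - (b i : ℤ))
      push_cast at h
      linarith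
    have hsum2 : (q:ℝ)^(-z) * (((n:ℝ)-1)*(1+(z:ℝ)) - M) ≤ T := by
      have h2 : ∑ i, (q:ℝ)^(-z) * (1 + ((z:ℝ) - (b i : ℝ))) ≤ T :=
        le_trans (Finset.sum_le_sum (fun i _ => hpt i)) hsum
      have h3 : ∑ i, (q:ℝ)^(-z) * (1 + ((z:ℝ) - (b i : ℝ)))
          = (q:ℝ)^(-z) * (((n:ℝ)-1)*(1+(z:ℝ)) - M) := by
        rw [← Finset.mul_sum]
        congr 1
        have h4 : ∀ i : Fin (n-1), (1:ℝ) + ((z:ℝ) - (b i:ℝ)) = (1+(z:ℝ)) - (b i : ℝ) :=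
          fun i => by ring
        simp_rw [h4]
        rw [Finset.sum_sub_distrib, Finset.sum_const, nsmul_eq_mul, hcard, hM]
      linarith [h3 ▸ h2]
    have e1 : (q:ℝ)^(-z) * (q:ℝ)^z = 1 := by
      rw [← zpow_add₀ hq0]; simp
    have key : ((n:ℝ)-1)*(z:ℝ) ≤ M := by
      have h5 := mul_le_mul_of_nonneg_right hsum2 (le_of_lt hzpos)
      rw [mul_comm ((q:ℝ)^(-z)) _, mul_assoc, e1, mul_one, hTz] at h5
      linarith
    have keyZ : ((n:ℤ)-1)*z ≤ ∑ i, (b i : ℤ) := by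
      have : (((n:ℤ)-1)*z : ℝ) ≤ ((∑ i, (b i : ℤ) : ℤ) : ℝ) := by
        rw [hMsum]; push_cast; linarith
      exact_mod_cast this
    rw [hf, hc, ht]
    linarith [keyZ]
  · -- non-integer case
    have ht := ht_nonint hint
    have hceil : ⌈bave⌉ = ⌊bave⌋ + 1 := by
      have h1 := Int.floor_le bave
      have h2 := Int.le_ceil bave
      have h3 := Int.ceil_le_floor_add_one bave
      have h4 : ⌊bave⌋ < ⌈bave⌉ := by
        by_contra h
        push_neg at h
        have : bave = ((⌊bave⌋ : ℤ) : ℝ) := by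
          have : ((⌈bave⌉:ℤ):ℝ) ≤ ((⌊bave⌋:ℤ):ℝ) := by exact_mod_cast h
          linarith
        exact hint ⟨⌊bave⌋, this⟩
      omega
    have hcpos : (0:ℝ) < (q:ℝ)^(-(⌈bave⌉:ℤ)) := zpow_pos hqpos _
    have hd : (q:ℝ)^(-(⌊bave⌋:ℤ)) - (q:ℝ)^(-(⌈bave⌉:ℤ)) = (q:ℝ)^(-(⌈bave⌉:ℤ)) * ((q:ℝ)-1) := by
      rw [hceil, show -(⌊bave⌋:ℤ) = -(⌊bave⌋+1) + 1 by ring, zpow_add₀ hq0, zpow_one]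
      ring
    have hd0 : (0:ℝ) < (q:ℝ)^(-(⌊bave⌋:ℤ)) - (q:ℝ)^(-(⌈bave⌉:ℤ)) := by
      rw [hd]
      exact mul_pos hcpos (by linarith)
    have hpt : ∀ i : Fin (n-1),
        (q:ℝ)^(-(⌈bave⌉:ℤ)) + (((⌈bave⌉:ℤ):ℝ) - (b i : ℝ)) * ((q:ℝ)^(-(⌊bave⌋:ℤ)) - (q:ℝ)^(-(⌈bave⌉:ℤ)))
          ≤ (q:ℝ) ^ (-(b i : ℤ)) := by
      intro i
      have he : (q:ℝ)^(-(b i : ℤ)) = (q:ℝ)^(-(⌈bave⌉:ℤ)) * (q:ℝ)^(⌈bave⌉ - (b i : ℤ)) := by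
        rw [← zpow_add₀ hq0]
        congr 1
        ring
      have h := bern_zpow (q:ℝ) hq2 (⌈bave⌉ - (b i : ℤ))
      have h2 := mul_le_mul_of_nonneg_left h (le_of_lt hcpos)
      rw [he, hd]
      push_cast at h2
      nlinarith [h2]
    have hsum2 : ((n:ℝ)-1) * (q:ℝ)^(-(⌈bave⌉:ℤ))
        + (((n:ℝ)-1)*((⌈bave⌉:ℤ):ℝ) - M) * ((q:ℝ)^(-(⌊bave⌋:ℤ)) - (q:ℝ)^(-(⌈bave⌉:ℤ))) ≤ T := by
      have h2 : ∑ i, ((q:ℝ)^(-(⌈bave⌉:ℤ)) + (((⌈bave⌉:ℤ):ℝ) - (b i : ℝ)) * ((q:ℝ)^(-(⌊bave⌋:ℤ)) - (q:ℝ)^(-(⌈bave⌉:ℤ))))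
          ≤ T := le_trans (Finset.sum_le_sum (fun i _ => hpt i)) hsum
      have h3 : ∑ i, ((q:ℝ)^(-(⌈bave⌉:ℤ)) + (((⌈bave⌉:ℤ):ℝ) - (b i : ℝ)) * ((q:ℝ)^(-(⌊bave⌋:ℤ)) - (q:ℝ)^(-(⌈bave⌉:ℤ))))
          = ((n:ℝ)-1) * (q:ℝ)^(-(⌈bave⌉:ℤ))
            + (((n:ℝ)-1)*((⌈bave⌉:ℤ):ℝ) - M) * ((q:ℝ)^(-(⌊bave⌋:ℤ)) - (q:ℝ)^(-(⌈bave⌉:ℤ))) := by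
        rw [Finset.sum_add_distrib, Finset.sum_const, nsmul_eq_mul, hcard,
          ← Finset.sum_mul]
        congr 2
        rw [Finset.sum_sub_distrib, Finset.sum_const, nsmul_eq_mul, hcard, hM]
      linarith [h3 ▸ h2]
    have hle : (((n:ℤ)-1)*⌈bave⌉ - (∑ i, (b i : ℤ)) : ℤ) ≤ t := by
      rw [ht]
      apply Int.le_floor.mpr
      rw [le_div_iff₀ hd0]
      push_cast [hMsum]
      push_cast at hMsum
      nlinarith [hsum2, hMsum]
    have hgoal : t * ⌊bave⌋ + ((n:ℤ) - 1 - t) * ⌈bave⌉ = ((n:ℤ)-1)*⌈bave⌉ - t := by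
      rw [hceil]; ring
    rw [hgoal]
    linarith [hle]
end

section
/- Let q be a prime power, 1 ≤ m ≤ ℓ, and let α* ∈ F_{q^ℓ}. Then there exist polynomials g_1, …, g_ℓ ∈ F_{q^ℓ}[X], each of degree at most q^m − 1, such that g_1(α*), …, g_ℓ(α*) form an F_q-basis of F_{q^ℓ}, and for every α ∈ F_{q^ℓ} with α ≠ α*, dim_{F_q} span_{F_q}{g_1(α), …, g_ℓ(α)} ≤ ℓ − m. -/
/-!
Let `W ⊆ F` be an `m`-dimensional `K`-subspace and `L(X) = ∏_{w ∈ W} (X - w)` its subspace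
polynomial, of degree `q ^ m`. Since `L(X + y) - L(X) - L(y)` has degree `< q ^ m` and vanishes on
`W`, and `L(c X) = c ^ (q ^ m) L(X) = c L(X)` for `c ∈ K`, evaluation of `L` is a `K`-linear map
with kernel `W`, so its image has dimension `ℓ - m`; and `L` is separable, so its coefficient
of `X`, `L'(0)`, is nonzero.
For a basis `b` of `F` put `g_i(X) = L(u_i (X - α*)) / (X - α*)` with `u_i = b_i / L'(0)`.
Then `g_i(α*) = u_i L'(0) = b_i`, while for `α ≠ α*` every `g_i(α)` lies in
`(α - α*)⁻¹ · L(F)`, a subspace of dimension `ℓ - m`.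
-/

open Polynomial

namespace Polynomial

section RepairPolynomial

variable {R : Type*} [CommRing R]

/-- `p(u (X - a)) / (X - a)` when `p(0) = 0`, written with `divX` to avoid polynomial division. -/
noncomputable def repairPolynomial (p : R[X]) (u a : R) : R[X] :=
  C u * p.divX.comp (C u * (X - C a))

theorem natDegree_repairPolynomial_le (p : R[X]) (u a : R) :
    (repairPolynomial p u a).natDegree ≤ p.natDegree - 1 := by
  calc (repairPolynomial p u a).natDegree ≤ (p.divX.comp (C u * (X - C a))).natDegree :=
        natDegree_C_mul_le _ _
    _ ≤ p.divX.natDegree * (C u * (X - C a)).natDegree := natDegree_comp_le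
    _ ≤ (p.natDegree - 1) * 1 := by
        gcongr
        · exact natDegree_divX_eq_natDegree_tsub_one.le
        · exact (natDegree_C_mul_le _ _).trans (natDegree_X_sub_C_le a)
    _ = p.natDegree - 1 := mul_one _

theorem eval_repairPolynomial_self (p : R[X]) (u a : R) :
    (repairPolynomial p u a).eval a = u * p.coeff 1 := by
  simp [repairPolynomial, eval_comp, ← coeff_zero_eq_eval_zero, coeff_divX]

theorem sub_mul_eval_repairPolynomial {p : R[X]} (hp : p.coeff 0 = 0) (u a x : R) :
    (x - a) * (repairPolynomial p u a).eval x = p.eval (u * (x - a)) := by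
  have h := congrArg (eval (u * (x - a))) (X_mul_divX_add p)
  simp only [eval_add, eval_mul, eval_X, eval_C, hp, add_zero] at h
  simp only [repairPolynomial, eval_mul, eval_C, eval_comp, eval_sub, eval_X, ← h]
  ring

end RepairPolynomial

section SubspacePolynomial

variable {K F : Type*} [Field K] [Field F] [Algebra K F] (W : Submodule K F) [Fintype W]

noncomputable def subspacePolynomial : F[X] := ∏ w : W, (X - C (w : F))

theorem eval_subspacePolynomial (x : F) :
    (subspacePolynomial W).eval x = ∏ w : W, (x - w) := by
  simp [subspacePolynomial, eval_prod]

theorem isMonicOfDegree_subspacePolynomial :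
    IsMonicOfDegree (subspacePolynomial W) (Fintype.card W) where
  natDegree_eq := by simp [subspacePolynomial]
  monic := monic_prod_of_monic _ _ fun w _ => monic_X_sub_C (w : F)

theorem eval_subspacePolynomial_eq_zero_iff {x : F} :
    (subspacePolynomial W).eval x = 0 ↔ x ∈ W := by
  simp [eval_subspacePolynomial, Finset.prod_eq_zero_iff, sub_eq_zero]

theorem eval_subspacePolynomial_add_mem (x : F) {a : F} (ha : a ∈ W) :
    (subspacePolynomial W).eval (x + a) = (subspacePolynomial W).eval x := by
  simp only [eval_subspacePolynomial]
  exact Fintype.prod_equiv (Equiv.subRight ⟨a, ha⟩) _ _ fun w => by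
    simp only [Equiv.subRight_apply, AddSubgroupClass.coe_sub]; ring

theorem eval_subspacePolynomial_add (x y : F) :
    (subspacePolynomial W).eval (x + y) =
      (subspacePolynomial W).eval x + (subspacePolynomial W).eval y := by
  set P := subspacePolynomial W
  have hP := isMonicOfDegree_subspacePolynomial W
  suffices P.comp (X + C y) - P - C (P.eval y) = 0 by
    simpa [eval_comp, sub_eq_zero, sub_sub, add_comm] using congrArg (eval x) this
  refine eq_zero_of_natDegree_lt_card_of_eval_eq_zero _ (f := ((↑) : W → F))
    Subtype.val_injective (fun w => ?_) ?_
  · simp [eval_comp, add_comm (w : F) y, eval_subspacePolynomial_add_mem W y w.2,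
      (eval_subspacePolynomial_eq_zero_iff W).2 w.2, P]
  · rw [natDegree_sub_C]
    have hPy := hP.comp one_ne_zero (isMonicOfDegree_X_add_one y)
    rw [mul_one] at hPy
    exact hPy.natDegree_sub_lt Fintype.card_ne_zero hP

theorem coeff_one_subspacePolynomial_ne_zero : (subspacePolynomial W).coeff 1 ≠ 0 := by
  have hsep : (subspacePolynomial W).Separable :=
    separable_prod_X_sub_C_iff.2 Subtype.val_injective
  have hroot : aeval (0 : F) (subspacePolynomial W) = 0 :=
    (eval_subspacePolynomial_eq_zero_iff W).2 W.zero_mem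
  simpa [← coeff_zero_eq_eval_zero, coeff_derivative] using hsep.aeval_derivative_ne_zero hroot

variable [Fintype K]

theorem eval_subspacePolynomial_smul (c : K) (x : F) :
    (subspacePolynomial W).eval (c • x) = c • (subspacePolynomial W).eval x := by
  rcases eq_or_ne c 0 with rfl | hc
  · simp [(eval_subspacePolynomial_eq_zero_iff W).2 W.zero_mem]
  have hcard : c ^ Fintype.card W = c := by
    rw [Module.card_eq_pow_finrank (K := K), FiniteField.pow_card_pow]
  calc (subspacePolynomial W).eval (c • x) = ∏ w : W, (c • x - c • (w : F)) := by
        rw [eval_subspacePolynomial]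
        exact Fintype.prod_equiv (LinearEquiv.smulOfNeZero K W c hc).symm.toEquiv _ _
          fun w => by simp [Units.smul_def, smul_smul, hc]
    _ = c ^ Fintype.card W • ∏ w : W, (x - w) := by
        simp_rw [← smul_sub, Finset.prod_smul, Finset.prod_const, Finset.card_univ]
    _ = c • (subspacePolynomial W).eval x := by rw [hcard, eval_subspacePolynomial]

noncomputable def subspacePolynomialLinearMap : F →ₗ[K] F where
  toFun x := (subspacePolynomial W).eval x
  map_add' := eval_subspacePolynomial_add W
  map_smul' := eval_subspacePolynomial_smul W

theorem subspacePolynomialLinearMap_apply (x : F) :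
    subspacePolynomialLinearMap W x = (subspacePolynomial W).eval x := rfl

theorem ker_subspacePolynomialLinearMap : LinearMap.ker (subspacePolynomialLinearMap W) = W := by
  ext x
  exact eval_subspacePolynomial_eq_zero_iff W

theorem finrank_range_subspacePolynomialLinearMap [FiniteDimensional K F] :
    Module.finrank K (LinearMap.range (subspacePolynomialLinearMap W)) =
      Module.finrank K F - Module.finrank K W := by
  rw [← (subspacePolynomialLinearMap W).finrank_range_add_finrank_ker,
    ker_subspacePolynomialLinearMap, Nat.add_sub_cancel]

theorem finrank_span_eval_repairPolynomial_le [FiniteDimensional K F] {ι : Type*} (u : ι → F)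
    {a x : F} (hx : x ≠ a) :
    Module.finrank K (Submodule.span K
        (Set.range fun i => (repairPolynomial (subspacePolynomial W) (u i) a).eval x)) ≤
      Module.finrank K F - Module.finrank K W := by
  set L := subspacePolynomialLinearMap W
  have hP0 : (subspacePolynomial W).coeff 0 = 0 := by
    rw [coeff_zero_eq_eval_zero, eval_subspacePolynomial_eq_zero_iff]
    exact W.zero_mem
  have hle : Submodule.span K
        (Set.range fun i => (repairPolynomial (subspacePolynomial W) (u i) a).eval x) ≤
      (LinearMap.range L).map (LinearMap.mulLeft K (x - a)⁻¹) := by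
    rw [Submodule.span_le]
    rintro _ ⟨i, rfl⟩
    refine ⟨L (u i * (x - a)), LinearMap.mem_range_self _ _, ?_⟩
    rw [LinearMap.mulLeft_apply, subspacePolynomialLinearMap_apply,
      ← sub_mul_eval_repairPolynomial hP0, inv_mul_cancel_left₀ (sub_ne_zero.2 hx)]
  calc _ ≤ Module.finrank K ((LinearMap.range L).map (LinearMap.mulLeft K (x - a)⁻¹)) :=
        Submodule.finrank_mono hle
    _ ≤ Module.finrank K (LinearMap.range L) := Submodule.finrank_map_le _ _
    _ = Module.finrank K F - Module.finrank K W := finrank_range_subspacePolynomialLinearMap W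

end SubspacePolynomial

end Polynomial

theorem statement5_general {K F : Type*} [Field K] [Field F] [Fintype K] [Fintype F] [Algebra K F]
    (q ℓ m : ℕ) (hq : Fintype.card K = q) (hℓ : Module.finrank K F = ℓ)
    (hmℓ : m ≤ ℓ) (αs : F) :
    ∃ g : Fin ℓ → Polynomial F,
      (∀ i, (g i).natDegree ≤ q ^ m - 1) ∧
      LinearIndependent K (fun i => (g i).eval αs) ∧
      Submodule.span K (Set.range fun i => (g i).eval αs) = ⊤ ∧
      ∀ α : F, α ≠ αs →
        Module.finrank K (Submodule.span K (Set.range fun i => (g i).eval α)) ≤ ℓ - m := by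
  classical
  obtain ⟨v, hv⟩ := exists_linearIndependent_of_le_finrank (R := K) (M := F) (hℓ ▸ hmℓ)
  set W := Submodule.span K (Set.range v)
  have hWrank : Module.finrank K W = m := by rw [finrank_span_eq_card hv, Fintype.card_fin]
  have hWcard : Fintype.card W = q ^ m := by
    rw [Module.card_eq_pow_finrank (K := K), hq, hWrank]
  set P := subspacePolynomial W
  let b := Module.finBasisOfFinrankEq K F hℓ
  have hc : P.coeff 1 ≠ 0 := coeff_one_subspacePolynomial_ne_zero W
  have hbasis : (fun i => (repairPolynomial P ((P.coeff 1)⁻¹ * b i) αs).eval αs) = b := by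
    funext i
    rw [eval_repairPolynomial_self, mul_right_comm, inv_mul_cancel₀ hc, one_mul]
  refine ⟨fun i => repairPolynomial P ((P.coeff 1)⁻¹ * b i) αs, fun i => ?_, ?_, ?_,
    fun α hα => ?_⟩
  · rw [← hWcard, ← (isMonicOfDegree_subspacePolynomial W).natDegree_eq]
    exact natDegree_repairPolynomial_le _ _ _
  · rw [hbasis]
    exact b.linearIndependent
  · rw [hbasis]
    exact b.span_eq
  · simpa only [hℓ, hWrank] using finrank_span_eval_repairPolynomial_le W _ hα

/-- Construction I (single erasure): for `1 ≤ m ≤ ℓ` and any `α* ∈ F_{q^ℓ}` there exist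
polynomials `g₁, …, g_ℓ` of degree at most `q^m − 1` whose evaluations at `α*` form an
`F_q`-basis of `F_{q^ℓ}`, while for every `α ≠ α*` the evaluations `g_i(α)` span an
`F_q`-subspace of dimension at most `ℓ − m`. -/
theorem statement5 {K F : Type*} [Field K] [Field F] [Fintype K] [Fintype F] [Algebra K F]
    (q ℓ m : ℕ) (hq : Fintype.card K = q) (hℓ : Module.finrank K F = ℓ)
    (hm1 : 1 ≤ m) (hmℓ : m ≤ ℓ) (αs : F) :
    ∃ g : Fin ℓ → Polynomial F,
      (∀ i, (g i).natDegree ≤ q ^ m - 1) ∧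
      LinearIndependent K (fun i => (g i).eval αs) ∧
      Submodule.span K (Set.range fun i => (g i).eval αs) = ⊤ ∧
      ∀ α : F, α ≠ αs →
        Module.finrank K (Submodule.span K (Set.range fun i => (g i).eval α)) ≤ ℓ - m :=
  statement5_general q ℓ m hq hℓ hmℓ αs
end

section
/- Let q be a prime power, 1 ≤ m ≤ ℓ, and let W be an m-dimensional F_q-subspace of F_{q^ℓ} satisfying (P1) τ_W ∈ F_q and (P2) L_W(L_W(α)) = 0 for all α ∈ F_{q^ℓ}. Let α*, ᾱ ∈ F_{q^ℓ} be distinct. Then there exist polynomials g_1, …, g_ℓ ∈ F_{q^ℓ}[X], each of degree q^m − 1, such that: (i) g_1(α*), …, g_ℓ(α*) form an F_q-basis of F_{q^ℓ}; (ii) g_i(ᾱ) = 0 for 1 ≤ i ≤ m; (iii) g_i(ᾱ) ∈ span_{F_q}{g_1(α*), …, g_m(α*)} for m + 1 ≤ i ≤ ℓ; and (iv) for every α ∈ F_{q^ℓ} \ {α*, ᾱ}, dim_{F_q} span_{F_q}{g_1(α), …, g_ℓ(α)} ≤ ℓ − m. -/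
/-!
`L_W` is `F_q`-linear with kernel `W`, so by (P2) its image is an `(ℓ - m)`-dimensional subspace
of `W`. Write `L_W = X · L̂_W` and `g_ν(X) = ν · L̂_W(ν (X - α*))`, so that
`(X - α*) g_ν(X) = L_W(ν (X - α*))` and `g_ν(α*) = L̂_W(0) ν`, where `L̂_W(0) = ± τ_W` is a nonzero
element of `F_q` by (P1). Take `ν_i = (ᾱ - α*)⁻¹ b_i` for a basis `b` whose first `m` vectors span
`W`. Then the `g_i(α*)` are an `F_q`-multiple of a basis; `g_i(ᾱ) = (ᾱ - α*)⁻¹ L_W(b_i)` vanishes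
for `i ≤ m` and otherwise lies in `(ᾱ - α*)⁻¹ W = span {g_j(α*) : j ≤ m}`; and at any other `α`
every `g_i(α)` lies in `(α - α*)⁻¹ · im L_W`.
-/

open scoped Classical

open Polynomial Finset

theorem Polynomial.eq_of_degree_eq_card_of_leadingCoeff_eq {R : Type*} [CommRing R] [IsDomain R]
    {p r : R[X]} {s : Finset R} (hp : p.degree = #s) (hr : r.degree = #s)
    (hlc : p.leadingCoeff = r.leadingCoeff) (heval : ∀ x ∈ s, p.eval x = r.eval x) : p = r := by
  have hp0 : p ≠ 0 := by rintro rfl; simp at hp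
  exact eq_of_degree_sub_lt_of_eval_finset_eq s
    (hp ▸ degree_sub_lt_left (hp.trans hr.symm) hp0 hlc) heval

theorem Submodule.exists_basis_span_image_lt_eq {K V : Type*} [Field K] [AddCommGroup V]
    [Module K V] [FiniteDimensional K V] {ℓ m : ℕ} (W : Submodule K V)
    (hW : Module.finrank K W = m) (hV : Module.finrank K V = ℓ) :
    ∃ b : Module.Basis (Fin ℓ) K V, span K (b '' {i | (i : ℕ) < m}) = W := by
  obtain ⟨U, hU⟩ := W.exists_isCompl
  have hdim := finrank_add_eq_of_isCompl hU
  let bW := Module.finBasisOfFinrankEq K W hW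
  let B := (bW.prod (Module.finBasisOfFinrankEq K U rfl)).map (prodEquivOfIsCompl W U hU)
  let e : Fin m ⊕ Fin (Module.finrank K U) ≃ Fin ℓ := finSumFinEquiv.trans (finCongr (by omega))
  have himage : {i : Fin ℓ | (i : ℕ) < m} = Set.range (e ∘ Sum.inl) := by
    ext i
    refine ⟨fun hi => ⟨⟨i, hi⟩, Fin.ext ?_⟩, ?_⟩
    · simp [e]
    · rintro ⟨j, rfl⟩
      simp [e]
  have hcomp : B.reindex e ∘ e ∘ Sum.inl = W.subtype ∘ bW := by
    funext j
    simp [B]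
  refine ⟨B.reindex e, ?_⟩
  rw [himage, ← Set.range_comp, hcomp, Set.range_comp, span_image, bW.span_eq, map_top,
    range_subtype]

theorem Module.Basis.linearIndependent_mul_left_and_span_eq_top {ι K F : Type*} [Field K]
    [Field F] [Algebra K F] (b : Module.Basis ι K F) {u : F} (hu : u ≠ 0) :
    LinearIndependent K (fun i => u * b i) ∧ Submodule.span K (Set.range fun i => u * b i) = ⊤ :=
  let b' := b.map ((LinearEquiv.smulOfNeZero F F u hu).restrictScalars K)
  ⟨b'.linearIndependent, b'.span_eq⟩

namespace AddSubgroup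

variable {F : Type*} [Field F] [Fintype F] (G : AddSubgroup F)

noncomputable def subspacePoly : F[X] := ∏ w ∈ univ.filter (· ∈ G), (X - C w)

noncomputable def subspacePolyDivX : F[X] :=
  ∏ w ∈ univ.filter (fun w => w ∈ G ∧ w ≠ 0), (X - C w)

theorem eval_subspacePoly (x : F) :
    G.subspacePoly.eval x = ∏ w ∈ univ.filter (· ∈ G), (x - w) := by
  simp [subspacePoly, eval_prod]

theorem eval_subspacePolyDivX (x : F) :
    G.subspacePolyDivX.eval x = ∏ w ∈ univ.filter (fun w => w ∈ G ∧ w ≠ 0), (x - w) := by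
  simp [subspacePolyDivX, eval_prod]

theorem filter_mem_and_ne_zero :
    univ.filter (fun w => w ∈ G ∧ w ≠ 0) = (univ.filter (· ∈ G)).erase 0 := by
  ext w; simp [and_comm]

theorem X_mul_subspacePolyDivX : X * G.subspacePolyDivX = G.subspacePoly := by
  rw [subspacePolyDivX, subspacePoly, filter_mem_and_ne_zero,
    ← mul_prod_erase (univ.filter (· ∈ G)) (fun w => X - C w)
      (mem_filter.mpr ⟨mem_univ 0, G.zero_mem⟩), C_0, sub_zero]

theorem subspacePoly_monic : G.subspacePoly.Monic :=
  monic_prod_of_monic _ _ fun w _ => monic_X_sub_C w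

theorem degree_subspacePoly : G.subspacePoly.degree = #(univ.filter (· ∈ G)) := by
  rw [degree_eq_natDegree G.subspacePoly_monic.ne_zero, subspacePoly,
    natDegree_finsetProd_X_sub_C_eq_card]

theorem eval_subspacePoly_eq_zero_iff {x : F} : G.subspacePoly.eval x = 0 ↔ x ∈ G := by
  simp [eval_subspacePoly, prod_eq_zero_iff, sub_eq_zero]

theorem eval_subspacePoly_add_mem {g : F} (hg : g ∈ G) (x : F) :
    G.subspacePoly.eval (g + x) = G.subspacePoly.eval x := by
  simp only [eval_subspacePoly]
  refine prod_nbij' (· - g) (· + g) ?_ ?_ ?_ ?_ ?_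
  all_goals simp +contextual [G.sub_mem, G.add_mem, hg]
  intros; ring

/-- `L(X + y) - L(X) - L(y)` has degree below `|G|` and vanishes on `G`. -/
theorem eval_subspacePoly_add (x y : F) :
    G.subspacePoly.eval (x + y) = G.subspacePoly.eval x + G.subspacePoly.eval y := by
  have hdeg : 0 < G.subspacePoly.degree := by
    rw [G.degree_subspacePoly]
    exact_mod_cast card_pos.mpr ⟨0, mem_filter.mpr ⟨mem_univ 0, G.zero_mem⟩⟩
  have hshift : G.subspacePoly.comp (X + C y) = G.subspacePoly + C (G.subspacePoly.eval y) := by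
    refine eq_of_degree_eq_card_of_leadingCoeff_eq (s := univ.filter (· ∈ G)) ?_ ?_ ?_ ?_
    · rw [degree_comp (by simp), degree_X_add_C, mul_one, G.degree_subspacePoly]
    · rw [degree_add_C hdeg, G.degree_subspacePoly]
    · rw [(G.subspacePoly_monic.comp_X_add_C y).leadingCoeff,
        (G.subspacePoly_monic.add_of_left ((degree_C_le).trans_lt hdeg)).leadingCoeff]
    · intro w hw
      have hwG : w ∈ G := by simpa using hw
      rw [eval_comp, eval_add, eval_X, eval_C, eval_add, eval_C, G.eval_subspacePoly_add_mem hwG,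
        G.eval_subspacePoly_eq_zero_iff.mpr hwG, zero_add]
  simpa [add_comm] using congrArg (eval x) hshift

theorem natDegree_subspacePolyDivX :
    G.subspacePolyDivX.natDegree = #(univ.filter (· ∈ G)) - 1 := by
  rw [subspacePolyDivX, natDegree_finsetProd_X_sub_C_eq_card, filter_mem_and_ne_zero,
    card_erase_of_mem (mem_filter.mpr ⟨mem_univ 0, G.zero_mem⟩)]

theorem eval_zero_subspacePolyDivX :
    G.subspacePolyDivX.eval 0 = (-1) ^ #(univ.filter (fun w => w ∈ G ∧ w ≠ 0)) *
      ∏ w ∈ univ.filter (fun w => w ∈ G ∧ w ≠ 0), w := by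
  rw [eval_subspacePolyDivX, ← prod_neg]
  simp

theorem eval_zero_subspacePolyDivX_ne_zero : G.subspacePolyDivX.eval 0 ≠ 0 := by
  rw [eval_subspacePolyDivX, prod_ne_zero_iff]
  simp +contextual

noncomputable def repairPoly (a ν : F) : F[X] := C ν * G.subspacePolyDivX.comp (C ν * (X - C a))

theorem natDegree_repairPoly (a : F) {ν : F} (hν : ν ≠ 0) :
    (G.repairPoly a ν).natDegree = #(univ.filter (· ∈ G)) - 1 := by
  have hlin : C ν * (X - C a) = C ν * X + C (-(ν * a)) := by rw [C_neg, C_mul]; ring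
  rw [repairPoly, natDegree_C_mul hν, natDegree_comp, natDegree_subspacePolyDivX, hlin,
    natDegree_linear hν, mul_one]

theorem eval_self_repairPoly (a ν : F) :
    (G.repairPoly a ν).eval a = G.subspacePolyDivX.eval 0 * ν := by
  simp [repairPoly, mul_comm]

theorem sub_mul_eval_repairPoly (a ν x : F) :
    (x - a) * (G.repairPoly a ν).eval x = G.subspacePoly.eval (ν * (x - a)) := by
  rw [← X_mul_subspacePolyDivX]
  simp [repairPoly]
  ring

theorem eval_repairPoly_inv_sub_mul {a x : F} (hx : x ≠ a) (y : F) :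
    (G.repairPoly a ((x - a)⁻¹ * y)).eval x = (x - a)⁻¹ * G.subspacePoly.eval y := by
  have hxa : x - a ≠ 0 := sub_ne_zero.mpr hx
  have h := G.sub_mul_eval_repairPoly a ((x - a)⁻¹ * y) x
  rw [mul_right_comm, inv_mul_cancel₀ hxa, one_mul] at h
  rw [← h, inv_mul_cancel_left₀ hxa]

end AddSubgroup

namespace Submodule

variable {K F : Type*} [Field K] [Field F] [Fintype F] [Algebra K F] (W : Submodule K F)

theorem exists_algebraMap_eq_eval_zero_subspacePolyDivX
    (hτ : (∏ w ∈ univ.filter (fun w => w ∈ W ∧ w ≠ 0), w) ∈ Set.range (algebraMap K F)) :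
    ∃ k : K, algebraMap K F k = W.toAddSubgroup.subspacePolyDivX.eval 0 := by
  obtain ⟨t, ht⟩ := hτ
  refine ⟨(-1) ^ #(univ.filter (fun w => w ∈ W ∧ w ≠ 0)) * t, ?_⟩
  simp [AddSubgroup.eval_zero_subspacePolyDivX, ht]

variable [Fintype K]

theorem card_filter_mem_toAddSubgroup :
    #(univ.filter (· ∈ W.toAddSubgroup)) = Fintype.card K ^ Module.finrank K W := by
  rw [← Module.card_eq_pow_finrank, ← Fintype.card_subtype]
  rfl

theorem eval_subspacePoly_smul (c : K) (x : F) :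
    W.toAddSubgroup.subspacePoly.eval (c • x) = c • W.toAddSubgroup.subspacePoly.eval x := by
  obtain rfl | hc := eq_or_ne c 0
  · simp [AddSubgroup.eval_subspacePoly_eq_zero_iff]
  set a := algebraMap K F c
  have ha : a ≠ 0 := (_root_.map_ne_zero _).mpr hc
  have ha' : a⁻¹ = algebraMap K F c⁻¹ := (map_inv₀ _ _).symm
  have hmem : ∀ (c' : K) {w : F}, w ∈ univ.filter (· ∈ W) →
      algebraMap K F c' * w ∈ univ.filter (· ∈ W) := by
    simp only [mem_filter, mem_univ, true_and, ← Algebra.smul_def]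
    exact fun c' _ hw => W.smul_mem c' hw
  simp only [Algebra.smul_def, AddSubgroup.eval_subspacePoly, mem_toAddSubgroup]
  calc ∏ w ∈ univ.filter (· ∈ W), (a * x - w)
      = ∏ w ∈ univ.filter (· ∈ W), a * (x - w) :=
        prod_nbij' (a⁻¹ * ·) (a * ·) (fun _ hw => ha' ▸ hmem c⁻¹ hw) (fun _ hw => hmem c hw)
          (fun _ _ => by field_simp) (fun _ _ => by field_simp) (fun _ _ => by field_simp)
    _ = a ^ (Fintype.card K ^ Module.finrank K W) * ∏ w ∈ univ.filter (· ∈ W), (x - w) := by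
        rw [prod_mul_distrib, prod_const, ← W.card_filter_mem_toAddSubgroup]
        rfl
    _ = a * ∏ w ∈ univ.filter (· ∈ W), (x - w) := by
        rw [← map_pow, FiniteField.pow_card_pow]

noncomputable def subspaceMap : F →ₗ[K] F where
  toFun x := W.toAddSubgroup.subspacePoly.eval x
  map_add' := W.toAddSubgroup.eval_subspacePoly_add
  map_smul' := W.eval_subspacePoly_smul

theorem subspaceMap_apply (x : F) : W.subspaceMap x = W.toAddSubgroup.subspacePoly.eval x := rfl

theorem ker_subspaceMap : LinearMap.ker W.subspaceMap = W := by
  ext x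
  simp [subspaceMap_apply, AddSubgroup.eval_subspacePoly_eq_zero_iff]

theorem finrank_range_subspaceMap :
    Module.finrank K (LinearMap.range W.subspaceMap) = Module.finrank K F - Module.finrank K W := by
  have := W.subspaceMap.finrank_range_add_finrank_ker
  rw [ker_subspaceMap] at this
  omega

theorem finrank_span_eval_repairPoly_le {ι : Type*} {a x : F} (hx : x ≠ a) (ν : ι → F) :
    Module.finrank K (span K (Set.range fun i => (W.toAddSubgroup.repairPoly a (ν i)).eval x)) ≤
      Module.finrank K F - Module.finrank K W := by
  have hle : span K (Set.range fun i => (W.toAddSubgroup.repairPoly a (ν i)).eval x) ≤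
      (LinearMap.range W.subspaceMap).map (LinearMap.mulLeft K (x - a)⁻¹) := by
    refine span_le.mpr ?_
    rintro _ ⟨i, rfl⟩
    refine ⟨W.subspaceMap (ν i * (x - a)), LinearMap.mem_range_self _ _, ?_⟩
    rw [LinearMap.mulLeft_apply, subspaceMap_apply, ← AddSubgroup.sub_mul_eval_repairPoly]
    field_simp [sub_ne_zero.mpr hx]
  rw [← finrank_range_subspaceMap]
  exact (finrank_mono hle).trans (finrank_map_le _ _)

end Submodule

open Submodule AddSubgroup in
theorem statement6_general {K F : Type*} [Field K] [Field F] [Fintype K] [Fintype F] [Algebra K F]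
    (q ℓ m : ℕ) (hq : Fintype.card K = q) (hℓ : Module.finrank K F = ℓ)
    (W : Submodule K F) (hW : Module.finrank K W = m)
    (hP1 : (∏ w ∈ Finset.univ.filter (fun w : F => w ∈ W ∧ w ≠ 0), w) ∈
      Set.range (algebraMap K F))
    (hP2 : ∀ α : F,
      (∏ w ∈ Finset.univ.filter (fun w : F => w ∈ W),
        ((∏ w' ∈ Finset.univ.filter (fun w' : F => w' ∈ W), (α - w')) - w)) = 0)
    (αs αb : F) (hne : αs ≠ αb) :
    ∃ g : Fin ℓ → Polynomial F,
      (∀ i, (g i).natDegree = q ^ m - 1) ∧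
      LinearIndependent K (fun i => (g i).eval αs) ∧
      Submodule.span K (Set.range fun i => (g i).eval αs) = ⊤ ∧
      (∀ i : Fin ℓ, (i : ℕ) < m → (g i).eval αb = 0) ∧
      (∀ i : Fin ℓ, m ≤ (i : ℕ) → (g i).eval αb ∈
        Submodule.span K {x : F | ∃ j : Fin ℓ, (j : ℕ) < m ∧ (g j).eval αs = x}) ∧
      ∀ α : F, α ≠ αs → α ≠ αb →
        Module.finrank K (Submodule.span K (Set.range fun i => (g i).eval α)) ≤ ℓ - m := by
  obtain ⟨b, hb⟩ := W.exists_basis_span_image_lt_eq hW hℓ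
  obtain ⟨k, hk⟩ := W.exists_algebraMap_eq_eval_zero_subspacePolyDivX hP1
  set G := W.toAddSubgroup
  have hLL : ∀ x, W.subspaceMap x ∈ W := fun x => by
    rw [← mem_toAddSubgroup, ← eval_subspacePoly_eq_zero_iff, subspaceMap_apply]
    simpa [eval_subspacePoly] using hP2 x
  have hd : αb - αs ≠ 0 := sub_ne_zero.mpr hne.symm
  set u := G.subspacePolyDivX.eval 0 * (αb - αs)⁻¹ with hu_def
  have hu : u ≠ 0 := mul_ne_zero G.eval_zero_subspacePolyDivX_ne_zero (inv_ne_zero hd)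
  have hαs : ∀ i, (G.repairPoly αs ((αb - αs)⁻¹ * b i)).eval αs = u * b i := fun i => by
    rw [G.eval_self_repairPoly]; ring
  refine ⟨fun i => G.repairPoly αs ((αb - αs)⁻¹ * b i), fun i => ?_, ?_, ?_, fun i hi => ?_,
    fun i _ => ?_, fun α hαs hαb => ?_⟩
  · rw [G.natDegree_repairPoly _ (mul_ne_zero (inv_ne_zero hd) (b.ne_zero i)),
      W.card_filter_mem_toAddSubgroup, hq, hW]
  · simpa only [hαs] using (b.linearIndependent_mul_left_and_span_eq_top hu).1
  · simpa only [hαs] using (b.linearIndependent_mul_left_and_span_eq_top hu).2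
  · have hbi : b i ∈ W := hb ▸ subset_span ⟨i, hi, rfl⟩
    rw [G.eval_repairPoly_inv_sub_mul hne.symm, G.eval_subspacePoly_eq_zero_iff.mpr hbi, mul_zero]
  · have hset : {x | ∃ j : Fin ℓ, (j : ℕ) < m ∧
        (G.repairPoly αs ((αb - αs)⁻¹ * b j)).eval αs = x} =
        LinearMap.mulLeft K u '' (b '' {j | (j : ℕ) < m}) := by
      ext x
      simp [hαs]
    rw [hset, span_image, hb, G.eval_repairPoly_inv_sub_mul hne.symm, ← subspaceMap_apply]
    refine ⟨k⁻¹ • W.subspaceMap (b i), W.smul_mem _ (hLL _), ?_⟩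
    rw [LinearMap.mulLeft_apply, Algebra.smul_def, map_inv₀, hk, hu_def]
    field_simp [G.eval_zero_subspacePolyDivX_ne_zero]
  · exact (W.finrank_span_eval_repairPoly_le hαs _).trans_eq (by rw [hℓ, hW])

/-- Construction II (two erasures, one-round scheme): if `W` is an `m`-dimensional
`F_q`-subspace of `F_{q^ℓ}` with `τ_W ∈ F_q` (P1) and `L_W ∘ L_W = 0` (P2), then for
distinct `α*, ᾱ` there are polynomials `g₁, …, g_ℓ` of degree `q^m − 1` such that:
(i) the `g_i(α*)` form an `F_q`-basis of `F_{q^ℓ}`; (ii) `g_i(ᾱ) = 0` for `i ≤ m`;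
(iii) `g_i(ᾱ) ∈ span_{F_q}{g_1(α*), …, g_m(α*)}` for `i > m`; and (iv) for every
`α ∉ {α*, ᾱ}` the `g_i(α)` span a subspace of dimension at most `ℓ − m`. -/
theorem statement6 {K F : Type*} [Field K] [Field F] [Fintype K] [Fintype F] [Algebra K F]
    (q ℓ m : ℕ) (hq : Fintype.card K = q) (hℓ : Module.finrank K F = ℓ)
    (hm1 : 1 ≤ m) (hmℓ : m ≤ ℓ)
    (W : Submodule K F) (hW : Module.finrank K W = m)
    (hP1 : (∏ w ∈ Finset.univ.filter (fun w : F => w ∈ W ∧ w ≠ 0), w) ∈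
      Set.range (algebraMap K F))
    (hP2 : ∀ α : F,
      (∏ w ∈ Finset.univ.filter (fun w : F => w ∈ W),
        ((∏ w' ∈ Finset.univ.filter (fun w' : F => w' ∈ W), (α - w')) - w)) = 0)
    (αs αb : F) (hne : αs ≠ αb) :
    ∃ g : Fin ℓ → Polynomial F,
      (∀ i, (g i).natDegree = q ^ m - 1) ∧
      LinearIndependent K (fun i => (g i).eval αs) ∧
      Submodule.span K (Set.range fun i => (g i).eval αs) = ⊤ ∧
      (∀ i : Fin ℓ, (i : ℕ) < m → (g i).eval αb = 0) ∧
      (∀ i : Fin ℓ, m ≤ (i : ℕ) → (g i).eval αb ∈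
        Submodule.span K {x : F | ∃ j : Fin ℓ, (j : ℕ) < m ∧ (g j).eval αs = x}) ∧
      ∀ α : F, α ≠ αs → α ≠ αb →
        Module.finrank K (Submodule.span K (Set.range fun i => (g i).eval α)) ≤ ℓ - m :=
  statement6_general q ℓ m hq hℓ W hW hP1 hP2 αs αb hne
end

section
/- Let q be a prime power and ℓ ≥ 1. For every m with 1 ≤ m ≤ ℓ there exists an m-dimensional F_q-subspace U of F_{q^ℓ} such that τ_U = ∏_{u ∈ U \ {0}} u equals 1 or −1 (in particular τ_U ∈ F_q). -/
/-!
Let `d = gcd m ℓ` and let `E ⊆ F` be the intermediate field with `q ^ d` elements. If `W` is an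
`E`-subspace of `E`-dimension `m / d`, then `W \ {0}` is a union of orbits `Eˣ • y`, each of
product `-y ^ (q ^ d - 1)` by Wilson's theorem in `E`, so `τ_W = ± z ^ (q ^ d - 1)`.
Scaling by `β ∈ Fˣ` multiplies `τ` by `β ^ (q ^ m - 1)`, and since
`gcd (q ^ m - 1) (q ^ ℓ - 1) = q ^ d - 1`, Bézout in the group `Fˣ` of order `q ^ ℓ - 1` gives
`β` with `β ^ (q ^ m - 1) = z ^ -(q ^ d - 1)`; then `τ_{βW} = ±1`.
-/

open scoped Classical

open Finset

namespace Submodule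

section NonzeroProd

variable {K F : Type*} [Semiring K] [CommRing F] [Fintype F] [Module K F]

/-- The paper's `τ_U`. -/
noncomputable def nonzeroProd (U : Submodule K F) : F :=
  ∏ u ∈ univ.filter (fun u : F => u ∈ U ∧ u ≠ 0), u

theorem nonzeroProd_restrictScalars {E : Type*} [Semiring E] [Module E F] [SMul K E]
    [IsScalarTower K E F] (W : Submodule E F) :
    (W.restrictScalars K).nonzeroProd = W.nonzeroProd :=
  rfl

theorem nonzeroProd_ne_zero [Nontrivial F] [NoZeroDivisors F] (U : Submodule K F) :
    U.nonzeroProd ≠ 0 :=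
  prod_ne_zero_iff.mpr fun _ hu => (mem_filter.mp hu).2.2

theorem card_filter_mem_ne_zero (U : Submodule K F) :
    #(univ.filter (fun u : F => u ∈ U ∧ u ≠ 0)) = Fintype.card U - 1 := by
  have : univ.filter (fun u : F => u ∈ U ∧ u ≠ 0) = (univ.filter (· ∈ U)).erase 0 := by
    ext
    simp [and_comm]
  rw [this, card_erase_of_mem (by simp [U.zero_mem]), Fintype.card_subtype]

end NonzeroProd

theorem nonzeroProd_map_smul {K F : Type*} [CommSemiring K] [Field F] [Fintype F] [Algebra K F]
    (β : Fˣ) (U : Submodule K F) :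
    (U.map (DistribMulAction.toLinearEquiv K F β : F →ₗ[K] F)).nonzeroProd =
      (β : F) ^ (Fintype.card U - 1) * U.nonzeroProd := by
  have : univ.filter
      (fun u : F => u ∈ U.map (DistribMulAction.toLinearEquiv K F β : F →ₗ[K] F) ∧ u ≠ 0) =
      (univ.filter (fun u : F => u ∈ U ∧ u ≠ 0)).image ((β : F) * ·) := by
    ext x
    simp only [mem_filter, mem_univ, true_and, mem_image, mem_map, LinearEquiv.coe_coe,
      DistribMulAction.toLinearEquiv_apply, Units.smul_def, smul_eq_mul]
    constructor
    · rintro ⟨⟨u, hu, rfl⟩, hx⟩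
      exact ⟨u, ⟨hu, right_ne_zero_of_mul hx⟩, rfl⟩
    · rintro ⟨u, ⟨hu, hu0⟩, rfl⟩
      exact ⟨⟨u, hu, rfl⟩, mul_ne_zero β.ne_zero hu0⟩
  rw [nonzeroProd, this, prod_image fun a _ b _ h => mul_left_cancel₀ β.ne_zero h,
    prod_mul_distrib, prod_const, card_filter_mem_ne_zero, nonzeroProd]

end Submodule

section Orbits

variable {E F : Type*} [Field E] [Fintype E] [Field F] [Algebra E F]

theorem prod_image_units_smul {u : F} (hu : u ≠ 0) :
    ∏ x ∈ univ.image (fun c : Eˣ => (c : E) • u), x = -u ^ (Fintype.card E - 1) := by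
  rw [prod_image fun a _ b _ h => Units.val_injective (smul_left_injective E hu h)]
  simp only [Algebra.smul_def, prod_mul_distrib, prod_const, card_univ, Fintype.card_units]
  rw [← map_prod, ← Units.coe_prod, FiniteField.prod_univ_units_id_eq_neg_one]
  simp

theorem exists_prod_eq_sign_mul_pow_of_units_smul_mem (S : Finset F) (h0 : (0 : F) ∉ S)
    (hS : ∀ c : Eˣ, ∀ x ∈ S, (c : E) • x ∈ S) :
    ∃ ε y : F, (ε = 1 ∨ ε = -1) ∧ ∏ x ∈ S, x = ε * y ^ (Fintype.card E - 1) := by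
  induction S using Finset.strongInduction with
  | H S ih =>
  obtain rfl | ⟨u, hu⟩ := S.eq_empty_or_nonempty
  · exact ⟨1, 1, Or.inl rfl, by simp⟩
  set O := univ.image (fun c : Eˣ => (c : E) • u)
  have hOS : O ⊆ S := fun x hx => by
    obtain ⟨c, -, rfl⟩ := mem_image.mp hx
    exact hS c u hu
  have huO : u ∈ O := mem_image.mpr ⟨1, mem_univ _, one_smul E u⟩
  have hclosed : ∀ c : Eˣ, ∀ x ∈ S \ O, (c : E) • x ∈ S \ O := by
    intro c x hx
    rw [mem_sdiff] at hx ⊢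
    refine ⟨hS c x hx.1, fun hcx => hx.2 ?_⟩
    obtain ⟨c', -, hc'⟩ := mem_image.mp hcx
    refine mem_image.mpr ⟨c⁻¹ * c', mem_univ _, ?_⟩
    rw [Units.val_mul, mul_smul, hc', smul_smul, Units.inv_mul, one_smul]
  obtain ⟨ε, y, hε, hy⟩ := ih (S \ O) (sdiff_ssubset hOS ⟨u, huO⟩)
    (fun h => h0 (mem_sdiff.mp h).1) hclosed
  refine ⟨-ε, u * y, by rcases hε with rfl | rfl <;> simp, ?_⟩
  rw [← prod_sdiff hOS, hy, prod_image_units_smul fun h => h0 (h ▸ hu)]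
  ring

theorem Submodule.exists_nonzeroProd_eq_sign_mul_pow [Fintype F] (W : Submodule E F) :
    ∃ ε y : F, (ε = 1 ∨ ε = -1) ∧ W.nonzeroProd = ε * y ^ (Fintype.card E - 1) :=
  exists_prod_eq_sign_mul_pow_of_units_smul_mem _ (by simp) fun c x hx => by
    simp only [mem_filter, mem_univ, true_and] at hx ⊢
    exact ⟨W.smul_mem _ hx.1, smul_ne_zero c.ne_zero hx.2⟩

end Orbits

theorem exists_pow_eq_pow_gcd_card {G : Type*} [Group G] [Fintype G] (y : G) (n : ℕ) :
    ∃ β : G, β ^ n = y ^ Nat.gcd n (Fintype.card G) := by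
  refine ⟨y ^ Nat.gcdA n (Fintype.card G), ?_⟩
  rw [← zpow_natCast, ← zpow_natCast y, Nat.gcd_eq_gcd_ab, zpow_add,
    zpow_mul y (Fintype.card G : ℤ), zpow_natCast y, pow_card_eq_one, one_zpow, mul_one,
    ← zpow_mul, mul_comm]

theorem FiniteField.exists_intermediateField_finrank_eq {K F : Type*} [Field K] [Finite K]
    [Field F] [Algebra K F] [Finite F] {d : ℕ} (hd : d ≠ 0) (hdvd : d ∣ Module.finrank K F) :
    ∃ E : IntermediateField K F, Module.finrank K E = d := by
  obtain ⟨p, _⟩ := CharP.exists K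
  have : Fact p.Prime := ⟨CharP.char_is_prime K p⟩
  have : NeZero d := ⟨hd⟩
  obtain ⟨f⟩ := nonempty_algHom_of_finrank_dvd (K := Extension K p d) (L := F)
    (by rwa [finrank_extension])
  exact ⟨f.fieldRange,
    f.equivFieldRange.toLinearEquiv.finrank_eq.symm.trans (finrank_extension K p d)⟩

/-- For every `1 ≤ m ≤ ℓ` there exists an `m`-dimensional `F_q`-subspace `U` of `F_{q^ℓ}`
with `τ_U = ∏_{u ∈ U \ {0}} u` equal to `1` or `−1`. -/
theorem statement7 {K F : Type*} [Field K] [Field F] [Fintype K] [Fintype F] [Algebra K F]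
    (q ℓ m : ℕ) (hq : Fintype.card K = q) (hℓ : Module.finrank K F = ℓ)
    (hm1 : 1 ≤ m) (hmℓ : m ≤ ℓ) :
    ∃ U : Submodule K F, Module.finrank K U = m ∧
      ((∏ u ∈ Finset.univ.filter (fun u : F => u ∈ U ∧ u ≠ 0), u) = 1 ∨
       (∏ u ∈ Finset.univ.filter (fun u : F => u ∈ U ∧ u ≠ 0), u) = -1) := by
  set d := Nat.gcd m ℓ
  obtain ⟨E, hE⟩ : ∃ E : IntermediateField K F, Module.finrank K E = d :=
    FiniteField.exists_intermediateField_finrank_eq (Nat.gcd_pos_of_pos_left ℓ hm1).ne'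
      (hℓ.symm ▸ Nat.gcd_dvd_right m ℓ)
  have hdeg : d * Module.finrank E F = ℓ := by
    rw [← hE, ← hℓ, Module.finrank_mul_finrank K E F]
  obtain ⟨v, hv⟩ := exists_linearIndependent_of_le_finrank (R := E) (M := F) (n := m / d)
    (Nat.div_le_of_le_mul (hdeg ▸ hmℓ))
  set W := Submodule.span E (Set.range v)
  have hW : Module.finrank K (W.restrictScalars K) = m := by
    change Module.finrank K W = m
    rw [← Module.finrank_mul_finrank K E W, hE, finrank_span_eq_card hv, Fintype.card_fin,
      Nat.mul_div_cancel' (Nat.gcd_dvd_left m ℓ)]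
  obtain ⟨ε, y, hε, hy⟩ := W.exists_nonzeroProd_eq_sign_mul_pow
  have hy0 : y ≠ 0 := by
    rintro rfl
    have := Fintype.one_lt_card (α := E)
    exact W.nonzeroProd_ne_zero (by rw [hy, zero_pow (by omega), mul_zero])
  obtain ⟨β, hβ⟩ := exists_pow_eq_pow_gcd_card (Units.mk0 y hy0)⁻¹ (q ^ m - 1)
  have hβy : (β : F) ^ (q ^ m - 1) * y ^ (Fintype.card E - 1) = 1 := by
    rw [Fintype.card_units, Module.card_eq_pow_finrank (K := K), hq, hℓ,
      Nat.pow_sub_one_gcd_pow_sub_one] at hβ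
    rw [← Units.val_pow_eq_pow_val, hβ, Module.card_eq_pow_finrank (K := K), hq, hE]
    simp only [Units.val_pow_eq_pow_val, Units.val_inv_eq_inv_val, Units.val_mk0, inv_pow]
    exact inv_mul_cancel₀ (pow_ne_zero _ hy0)
  refine ⟨(W.restrictScalars K).map (DistribMulAction.toLinearEquiv K F β : F →ₗ[K] F),
    by rw [LinearEquiv.finrank_map_eq, hW], ?_⟩
  show Submodule.nonzeroProd _ = 1 ∨ Submodule.nonzeroProd _ = -1
  rw [Submodule.nonzeroProd_map_smul, Module.card_eq_pow_finrank (K := K), hW, hq,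
    Submodule.nonzeroProd_restrictScalars, hy,
    show (β : F) ^ (q ^ m - 1) * (ε * y ^ (Fintype.card E - 1)) = ε by
      linear_combination ε * hβy]
  exact hε
end

section
/- Let q be an even prime power (a power of 2), let ℓ be even, and let W be an F_q-subspace of F_{q^ℓ} that contains the subfield F_{q^{ℓ/2}}. Then L_W(α) ∈ F_{q^{ℓ/2}} for every α ∈ F_{q^ℓ}, and consequently L_W(L_W(α)) = 0 for every α ∈ F_{q^ℓ}. -/
open scoped Classical

/-- If `q` is a power of 2, `ℓ` is even, and `W` is an `F_q`-subspace of `F_{q^ℓ}`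
containing the subfield `F_{q^{ℓ/2}} = {x : x^{q^{ℓ/2}} = x}`, then `L_W(α)` lies in
`F_{q^{ℓ/2}}` for every `α`, and consequently `L_W(L_W(α)) = 0` for every `α`. -/
theorem statement11 {K F : Type*} [Field K] [Field F] [Fintype K] [Fintype F] [Algebra K F]
    (q ℓ : ℕ) (hq : Fintype.card K = q) (hq2 : ∃ s : ℕ, 1 ≤ s ∧ q = 2 ^ s)
    (hℓ : Module.finrank K F = ℓ) (hℓeven : 2 ∣ ℓ)
    (W : Submodule K F) (hWsub : ∀ x : F, x ^ q ^ (ℓ / 2) = x → x ∈ W) :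
    (∀ α : F,
      (∏ w ∈ Finset.univ.filter (fun w : F => w ∈ W), (α - w)) ^ q ^ (ℓ / 2) =
        ∏ w ∈ Finset.univ.filter (fun w : F => w ∈ W), (α - w)) ∧
    ∀ α : F,
      (∏ w ∈ Finset.univ.filter (fun w : F => w ∈ W),
        ((∏ w' ∈ Finset.univ.filter (fun w' : F => w' ∈ W), (α - w')) - w)) = 0 := by
  classical
  obtain ⟨s, hs1, rfl⟩ := hq2
  set q : ℕ := 2 ^ s with hqdef
  set m : ℕ := ℓ / 2 with hmdef
  have hm : m + m = ℓ := by omega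
  have hcard : Fintype.card F = q ^ ℓ := by
    rw [← hq, ← hℓ]; exact Module.card_eq_pow_finrank
  -- characteristic 2
  have hchar : CharP F 2 := by
    obtain ⟨p, hp⟩ := CharP.exists F
    obtain ⟨n, hpn, hcard'⟩ := FiniteField.card F p
    have h2 : p = 2 := by
      have hdvd : p ∣ 2 ^ (s * ℓ) := by
        rw [← pow_mul] at hcard
        rw [← hcard, hcard']
        exact dvd_pow_self p n.pos.ne'
      have := hpn.dvd_of_dvd_pow hdvd
      exact (Nat.prime_dvd_prime_iff_eq hpn Nat.prime_two).mp this
    rwa [h2] at hp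
  haveI := hchar
  haveI : Fact (Nat.Prime 2) := ⟨Nat.prime_two⟩
  have hqm : q ^ m = 2 ^ (s * m) := by rw [hqdef, ← pow_mul]
  -- x ↦ x^(q^m) squares to the identity
  have hpow2 : ∀ x : F, (x ^ q ^ m) ^ q ^ m = x := by
    intro x
    rw [← pow_mul, ← pow_add, hm, ← hcard]
    exact FiniteField.pow_card x
  have hinj : Function.Injective (fun x : F => x ^ q ^ m) := by
    intro a b h
    have := congrArg (fun x : F => x ^ q ^ m) h
    simpa [hpow2] using this
  have hadd : ∀ a b : F, (a + b) ^ q ^ m = a ^ q ^ m + b ^ q ^ m := by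
    intro a b; rw [hqm]; exact add_pow_char_pow a b 2 (s * m)
  have hsub : ∀ a b : F, (a - b) ^ q ^ m = a ^ q ^ m - b ^ q ^ m := by
    intro a b; rw [hqm]; exact sub_pow_char_pow a b (s * m)
  -- W is stable under x ↦ x^(q^m)
  have hσW : ∀ w : F, w ∈ W → w ^ q ^ m ∈ W := by
    intro w hw
    have h1 : w ^ q ^ m + w ∈ W := by
      apply hWsub
      rw [hadd, hpow2, add_comm]
    have := W.sub_mem h1 hw
    simpa using this
  -- α^(q^m) - α is fixed, hence in W
  have hδ : ∀ α : F, α ^ q ^ m - α ∈ W := by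
    intro α
    apply hWsub
    rw [hsub, hpow2, ← neg_sub, CharTwo.neg_eq]
  set Wf : Finset F := Finset.univ.filter (fun w : F => w ∈ W) with hWf
  have hmemWf : ∀ w : F, w ∈ Wf ↔ w ∈ W := by
    intro w; simp [hWf]
  -- image of Wf under x ↦ x^(q^m) is Wf
  have himg : Wf.image (fun w : F => w ^ q ^ m) = Wf := by
    apply Finset.eq_of_subset_of_card_le
    · intro v hv
      obtain ⟨w, hw, rfl⟩ := Finset.mem_image.mp hv
      exact (hmemWf _).mpr (hσW w ((hmemWf w).mp hw))
    · exact le_of_eq (Finset.card_image_of_injective Wf hinj).symm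
  have hmain : ∀ α : F, (∏ w ∈ Wf, (α - w)) ^ q ^ m = ∏ w ∈ Wf, (α - w) := by
    intro α
    rw [← Finset.prod_pow]
    have step1 : ∏ w ∈ Wf, (α - w) ^ q ^ m = ∏ w ∈ Wf, (α ^ q ^ m - w ^ q ^ m) :=
      Finset.prod_congr rfl fun w _ => hsub α w
    have step2 : ∏ w ∈ Wf, (α ^ q ^ m - w ^ q ^ m) = ∏ w ∈ Wf, (α ^ q ^ m - w) := by
      rw [← Finset.prod_image (f := fun w => α ^ q ^ m - w)
        (fun x _ y _ h => hinj h), himg]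
    have step3 : ∏ w ∈ Wf, (α ^ q ^ m - w) = ∏ w ∈ Wf, (α - w) := by
      set δ : F := α ^ q ^ m - α with hδdef
      have hδW : δ ∈ W := hδ α
      refine Finset.prod_nbij' (fun w => w - δ) (fun v => v + δ) ?_ ?_ ?_ ?_ ?_
      · intro w hw
        exact (hmemWf _).mpr (W.sub_mem ((hmemWf w).mp hw) hδW)
      · intro v hv
        exact (hmemWf _).mpr (W.add_mem ((hmemWf v).mp hv) hδW)
      · intro a _; ring
      · intro a _; ring
      · intro w _
        rw [hδdef]; ring
    rw [step1, step2, step3]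
  refine ⟨hmain, ?_⟩
  intro α
  have hy : (∏ w ∈ Wf, (α - w)) ∈ Wf := (hmemWf _).mpr (hWsub _ (hmain α))
  exact Finset.prod_eq_zero hy (sub_self _)
end

section
/- Let q be an even prime power (q = 2^s for some s ≥ 1), let ℓ be even, and let m be an integer with ℓ/2 ≤ m ≤ ℓ. Then there exists an m-dimensional F_q-subspace W of F_{q^ℓ} satisfying both (P1) τ_W ∈ F_q and (P2) L_W(L_W(α)) = 0 for all α ∈ F_{q^ℓ}. -/
open scoped Classical
open Finset Polynomial

private lemma two_pow_add' {F : Type*} [CommRing F] (h2 : ∀ a : F, a + a = 0)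
    (j : ℕ) (x y : F) : (x + y) ^ (2 ^ j) = x ^ (2 ^ j) + y ^ (2 ^ j) := by
  induction j with
  | zero => simp
  | succ j ih =>
    have hsq : ∀ a b : F, (a + b) ^ 2 = a ^ 2 + b ^ 2 := by
      intro a b
      have : (a + b) ^ 2 = a ^ 2 + b ^ 2 + (a * b + a * b) := by ring
      rw [this, h2, add_zero]
    have h1 : (2:ℕ) ^ (j+1) = 2 ^ j * 2 := by ring
    rw [h1, pow_mul, pow_mul, pow_mul, ih, hsq]

private lemma pow_pow_fix {F : Type*} [Monoid F] {N : ℕ} (k : ℕ) {x : F} (h : x ^ N = x) :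
    x ^ (N ^ k) = x := by
  induction k with
  | zero => simp
  | succ k ih => rw [pow_succ, pow_mul, ih, h]

private lemma card_filter_pow_eq {F : Type*} [Field F] [Fintype F] (N : ℕ) (hN : 2 ≤ N)
    (hdvd : (N - 1) ∣ (Fintype.card F - 1)) :
    (Finset.univ.filter fun x : F => x ^ N = x).card = N := by

  have hN1 : (1:ℕ) < N := hN
  set p : F[X] := X ^ N - X with hp
  have hdeg : p.natDegree = N := FiniteField.X_pow_card_sub_X_natDegree_eq F hN1
  have hpne : p ≠ 0 := FiniteField.X_pow_card_sub_X_ne_zero F hN1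
  set A := Finset.univ.filter (fun x : F => x ^ N = x) with hA
  -- upper bound
  have hupper : A.card ≤ N := by
    have hsub : A ⊆ p.roots.toFinset := by
      intro x hx
      rw [Finset.mem_filter] at hx
      rw [Multiset.mem_toFinset, Polynomial.mem_roots hpne]
      simp [hp, Polynomial.IsRoot, hx.2, sub_eq_zero]
    calc A.card ≤ p.roots.toFinset.card := Finset.card_le_card hsub
      _ ≤ Multiset.card p.roots := Multiset.toFinset_card_le _
      _ ≤ p.natDegree := Polynomial.card_roots' p
      _ = N := hdeg
  -- divisibility
  have hdvd2 : p ∣ (X ^ Fintype.card F - X : F[X]) := by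
    obtain ⟨k, hk⟩ := hdvd
    have h1 : (X ^ (N-1) - 1 : F[X]) ∣ (X ^ (Fintype.card F - 1) - 1) := by
      have := sub_dvd_pow_sub_pow (X ^ (N-1) : F[X]) 1 k
      rwa [← pow_mul, one_pow, ← hk] at this
    obtain ⟨r, hr⟩ := h1
    refine ⟨r, ?_⟩
    have hNpos : 1 ≤ N := by omega
    have hCpos : 1 ≤ Fintype.card F := Fintype.card_pos
    have e1 : (X ^ Fintype.card F - X : F[X]) = X * (X ^ (Fintype.card F - 1) - 1) := by
      rw [mul_sub, mul_one, ← pow_succ', Nat.sub_add_cancel hCpos]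
    have e2 : p = X * (X ^ (N - 1) - 1) := by
      rw [hp, mul_sub, mul_one, ← pow_succ', Nat.sub_add_cancel hNpos]
    rw [e1, hr, e2]; ring
  obtain ⟨r, hr⟩ := hdvd2
  have hbigne : (X ^ Fintype.card F - X : F[X]) ≠ 0 :=
    FiniteField.X_pow_card_sub_X_ne_zero F Fintype.one_lt_card
  have hrne : r ≠ 0 := by rintro rfl; rw [mul_zero] at hr; exact hbigne hr
  have hdegsum : N + r.natDegree = Fintype.card F := by
    rw [← hdeg, ← Polynomial.natDegree_mul hpne hrne, ← hr,
      FiniteField.X_pow_card_sub_X_natDegree_eq F Fintype.one_lt_card]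
  -- lower bound
  have hlower : Finset.card (Finset.univ.filter (fun x : F => ¬ (x ^ N = x))) ≤
      r.natDegree := by
    have hsub : (Finset.univ.filter (fun x : F => ¬ (x ^ N = x))) ⊆ r.roots.toFinset := by
      intro x hx
      rw [Finset.mem_filter] at hx
      have heval : Polynomial.eval x (X ^ Fintype.card F - X : F[X]) = 0 := by
        simp [FiniteField.pow_card, sub_eq_zero]
      rw [hr, Polynomial.eval_mul] at heval
      have hpx : Polynomial.eval x p ≠ 0 := by
        simp only [hp, Polynomial.eval_sub, Polynomial.eval_pow, Polynomial.eval_X]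
        intro hc
        exact hx.2 (by rwa [sub_eq_zero] at hc)
      have : Polynomial.eval x r = 0 := by
        rcases mul_eq_zero.mp heval with h | h
        · exact absurd h hpx
        · exact h
      rw [Multiset.mem_toFinset, Polynomial.mem_roots hrne]
      exact this
    calc _ ≤ r.roots.toFinset.card := Finset.card_le_card hsub
      _ ≤ Multiset.card r.roots := Multiset.toFinset_card_le _
      _ ≤ r.natDegree := Polynomial.card_roots' r
  have hsum := Finset.card_filter_add_card_filter_not
    (s := (Finset.univ : Finset F)) (p := fun x : F => x ^ N = x)
  rw [Finset.card_univ] at hsum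
  rw [← hA] at hsum
  omega

/-- In char 2, the product of all nonzero solutions of `x^N = x` is 1. -/
private lemma prod_filter_pow_eq_one {F : Type*} [Field F] [Fintype F]
    (h2 : ∀ a : F, a + a = 0) (N : ℕ) :
    (∏ x ∈ Finset.univ.filter (fun x : F => x ^ N = x ∧ x ≠ 0), x) = 1 := by
  refine Finset.prod_involution (fun a _ => a⁻¹) ?_ ?_ ?_ ?_
  · intro a ha
    rw [Finset.mem_filter] at ha
    exact mul_inv_cancel₀ ha.2.2
  · intro a ha hne
    rw [Finset.mem_filter] at ha
    intro hc
    apply hne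
    have hc' : a⁻¹ = a := hc
    have hsq : a * a = 1 := by
      nth_rewrite 1 [← hc']; exact inv_mul_cancel₀ ha.2.2
    have hz : (a + 1) * (a + 1) = 0 := by
      have expand : (a + 1) * (a + 1) = a * a + 1 + (a + a) := by ring
      rw [expand, hsq, h2 1, h2 a, add_zero]
    have h0 := mul_self_eq_zero.mp hz
    linear_combination h0 - h2 1
  · intro a ha
    rw [Finset.mem_filter] at ha ⊢
    refine ⟨Finset.mem_univ _, ?_, inv_ne_zero ha.2.2⟩
    show (a⁻¹) ^ N = a⁻¹
    rw [inv_pow, ha.2.1]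
  · intro a _
    exact inv_inv a

private lemma gcd_pow_sub_one_dvd (q d n : ℕ) (hq : 2 ≤ q) (hd : 1 ≤ d) :
    Nat.gcd (q ^ d - 1) (q ^ n - 1) ∣ q ^ (Nat.gcd d n) - 1 := by
  set c := Nat.gcd (q ^ d - 1) (q ^ n - 1) with hc
  have hqd1 : 1 ≤ q ^ d := Nat.one_le_pow _ _ (by omega)
  have hqn1 : 1 ≤ q ^ n := Nat.one_le_pow _ _ (by omega)
  have hqe1 : 1 ≤ q ^ (Nat.gcd d n) := Nat.one_le_pow _ _ (by omega)
  have hcd : c ∣ q ^ d - 1 := Nat.gcd_dvd_left _ _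
  have hcn : c ∣ q ^ n - 1 := Nat.gcd_dvd_right _ _
  -- work in ZMod c
  have key : ∀ (j : ℕ), c ∣ q ^ j - 1 ↔ ((q : ZMod c)) ^ j = 1 := by
    intro j
    have h1j : 1 ≤ q ^ j := Nat.one_le_pow _ _ (by omega)
    rw [← ZMod.natCast_eq_zero_iff]
    constructor
    · intro h
      have := h
      rw [Nat.cast_sub h1j] at this
      push_cast at this
      linear_combination this
    · intro h
      rw [Nat.cast_sub h1j]
      push_cast
      rw [h]; ring
  have hxd : ((q : ZMod c)) ^ d = 1 := (key d).mp hcd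
  have hxn : ((q : ZMod c)) ^ n = 1 := (key n).mp hcn
  have hod : orderOf ((q : ZMod c)) ∣ Nat.gcd d n :=
    Nat.dvd_gcd (orderOf_dvd_of_pow_eq_one hxd) (orderOf_dvd_of_pow_eq_one hxn)
  have hxe : ((q : ZMod c)) ^ (Nat.gcd d n) = 1 := orderOf_dvd_iff_pow_eq_one.mp hod
  exact (key _).mpr hxe

private lemma exists_tu (q d n : ℕ) (hq : 2 ≤ q) (hn : 1 ≤ n) :
    ∃ t u : ℕ, (q ^ d - 1) * t + (q ^ (Nat.gcd d n) - 1) = u * (q ^ n - 1) := by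
  rcases Nat.eq_zero_or_pos d with rfl | hd
  · refine ⟨0, 1, ?_⟩
    simp [Nat.gcd_zero_left]
  -- d ≥ 1
  have hqd1 : 1 ≤ q ^ d := Nat.one_le_pow _ _ (by omega)
  have hqn1 : 2 ≤ q ^ n := by
    have h1 : q ^ 1 ≤ q ^ n := Nat.pow_le_pow_right (by omega) hn
    rw [pow_one] at h1; omega
  have hqe1 : 1 ≤ q ^ (Nat.gcd d n) := Nat.one_le_pow _ _ (by omega)
  obtain ⟨w, hw⟩ := gcd_pow_sub_one_dvd q d n hq hd
  -- Bezout over ℤ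
  set a : ℤ := ((q ^ d - 1 : ℕ) : ℤ) with hadef
  set b : ℤ := ((q ^ n - 1 : ℕ) : ℤ) with hbdef
  have hbez : (Nat.gcd (q ^ d - 1) (q ^ n - 1) : ℤ) = a * Int.gcdA a b + b * Int.gcdB a b := by
    have := Int.gcd_eq_gcd_ab a b
    rwa [hadef, hbdef, Int.gcd_natCast_natCast] at this
  set A : ℤ := Int.gcdA a b
  set B : ℤ := Int.gcdB a b
  have hbpos : 0 < b := by
    rw [hbdef]
    exact_mod_cast Nat.sub_pos_of_lt hqn1
  have ha0 : 0 ≤ a := by rw [hadef]; positivity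
  -- q^e - 1 = a * (A*w) + b * (B*w)
  have hkey : ((q ^ (Nat.gcd d n) - 1 : ℕ) : ℤ) = a * (A * w) + b * (B * w) := by
    rw [hw]
    push_cast
    rw [hbez]
    ring
  set M : ℤ := |A| * w + 1 with hMdef
  have hM0 : 0 ≤ M := by positivity
  set t' : ℤ := (b * M - A * w) with ht'def
  have ht'0 : 0 ≤ t' := by
    have h1 : A * w ≤ |A| * w := by
      have := le_abs_self A
      exact mul_le_mul_of_nonneg_right this (by positivity)
    have h2 : M ≤ b * M := le_mul_of_one_le_left hM0 hbpos
    rw [ht'def]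
    have : |A| * w < M := by rw [hMdef]; omega
    omega
  set u' : ℤ := B * w + a * M with hu'def
  have hid : a * t' + ((q ^ (Nat.gcd d n) - 1 : ℕ) : ℤ) = u' * b := by
    rw [ht'def, hu'def, hkey]; ring
  have hu'0 : 0 ≤ u' := by
    have hlhs : 0 ≤ a * t' + ((q ^ (Nat.gcd d n) - 1 : ℕ) : ℤ) := by positivity
    nlinarith [hid, hbpos]
  refine ⟨t'.toNat, u'.toNat, ?_⟩
  have := hid
  zify
  rw [Int.toNat_of_nonneg ht'0, Int.toNat_of_nonneg hu'0]
  push_cast [Nat.cast_sub hqd1, Nat.cast_sub (by omega : 1 ≤ q ^ n), Nat.cast_sub hqe1] at this ⊢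
  rw [hadef, hbdef] at this
  push_cast [Nat.cast_sub hqd1, Nat.cast_sub (by omega : 1 ≤ q ^ n)] at this
  linarith [this]

private lemma pow_sub_one_dvd_pow_sub_one (q a b : ℕ) (h : a ∣ b) :
    q ^ a - 1 ∣ q ^ b - 1 := by
  obtain ⟨k, rfl⟩ := h
  have := Nat.sub_dvd_pow_sub_pow (q ^ a) 1 k
  rwa [one_pow, ← pow_mul] at this

set_option maxHeartbeats 1000000 in
private lemma S_exists {K F : Type*} [Field K] [Field F] [Fintype K] [Fintype F] [Algebra K F]
    (q n d s : ℕ) (hq : Fintype.card K = q) (hqs : q = 2 ^ s)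
    (hq2 : 2 ≤ q) (h2 : ∀ a : F, a + a = 0)
    (hcardF : Fintype.card F = q ^ (2 * n))
    (hn : 1 ≤ n) (hdn : d ≤ n) :
    ∃ S : Submodule K F,
      (∀ x ∈ S, x ^ (q ^ n) = x) ∧
      (Finset.univ.filter (fun x : F => x ∈ S)).card = q ^ d ∧
      (∏ x ∈ Finset.univ.filter (fun x : F => x ∈ S ∧ x ≠ 0), x) = 1 := by
  have hq1 : 1 < q := hq2
  set e := Nat.gcd d n with hedef
  have hed : e ∣ d := Nat.gcd_dvd_left _ _
  have hen : e ∣ n := Nat.gcd_dvd_right _ _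
  have he1 : 1 ≤ e := Nat.gcd_pos_of_pos_right _ (by omega)
  -- frobenius additivity for any power q^j
  have hfrob : ∀ (j : ℕ) (x y : F), (x + y) ^ (q ^ j) = x ^ (q ^ j) + y ^ (q ^ j) := by
    intro j x y
    have : q ^ j = 2 ^ (s * j) := by rw [hqs, ← pow_mul]
    rw [this]
    exact two_pow_add' h2 (s * j) x y
  have hsub : ∀ x y : F, x - y = x + y := by
    intro x y
    rw [sub_eq_add_neg, neg_eq_of_add_eq_zero_left (h2 y)]
  -- fixed points of q^e-power are fixed points of q^n-power
  have heTn : ∀ x : F, x ^ (q ^ e) = x → x ^ (q ^ n) = x := by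
    intro x hx
    have h1 : (q ^ e) ^ (n / e) = q ^ n := by
      rw [← pow_mul, Nat.mul_div_cancel' hen]
    rw [← h1]
    exact pow_pow_fix _ hx
  -- cardinalities
  have hcard_e : (Finset.univ.filter fun x : F => x ^ (q ^ e) = x).card = q ^ e := by
    refine card_filter_pow_eq _ ?_ ?_
    · have h1 : q ^ 1 ≤ q ^ e := Nat.pow_le_pow_right (by omega) he1
      rw [pow_one] at h1; omega
    · rw [hcardF]
      exact pow_sub_one_dvd_pow_sub_one q e (2 * n) (hen.trans ⟨2, by ring⟩)
  have hcard_n : (Finset.univ.filter fun x : F => x ^ (q ^ n) = x).card = q ^ n := by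
    refine card_filter_pow_eq _ ?_ ?_
    · have h1 : q ^ 1 ≤ q ^ n := Nat.pow_le_pow_right (by omega) hn
      rw [pow_one] at h1; omega
    · rw [hcardF]
      exact pow_sub_one_dvd_pow_sub_one q n (2 * n) ⟨2, by ring⟩
  -- the flag induction
  have flag : ∀ k : ℕ, e * k ≤ n → ∃ S : Submodule K F,
      (∀ x ∈ S, x ^ (q ^ n) = x) ∧
      (∀ c x : F, c ^ (q ^ e) = c → x ∈ S → c * x ∈ S) ∧
      (Finset.univ.filter (fun x : F => x ∈ S)).card = q ^ (e * k) ∧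
      ∃ z : F, z ^ (q ^ n) = z ∧ z ≠ 0 ∧
        (∏ x ∈ Finset.univ.filter (fun x : F => x ∈ S ∧ x ≠ 0), x) = z ^ (q ^ e - 1) := by
    have hqe0 : q ^ e ≠ 0 := pow_ne_zero _ (by omega)
    have hKfix : ∀ (j : ℕ) (r : K), r ^ (q ^ j) = r := by
      intro j r; rw [← hq]; exact FiniteField.pow_card_pow j r
    have halg : ∀ (j : ℕ) (r : K), (algebraMap K F r) ^ (q ^ j) = algebraMap K F r := by
      intro j r; rw [← map_pow, hKfix]
    have hTeinv : ∀ c : F, c ^ (q ^ e) = c → c⁻¹ ^ (q ^ e) = c⁻¹ := by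
      intro c hc; rw [inv_pow, hc]
    intro k
    induction k with
    | zero =>
      intro _
      refine ⟨⊥, ?_, ?_, ?_, 1, one_pow _, one_ne_zero, ?_⟩
      · intro x hx; rw [Submodule.mem_bot] at hx; subst hx
        exact zero_pow (pow_ne_zero _ (by omega))
      · intro c x _ hx; rw [Submodule.mem_bot] at hx ⊢; rw [hx, mul_zero]
      · have hh : Finset.univ.filter (fun x : F => x ∈ (⊥ : Submodule K F)) = {0} := by
          ext x; simp [Submodule.mem_bot]
        rw [hh, Finset.card_singleton, mul_zero, pow_zero]
      · have hh : Finset.univ.filter (fun x : F => x ∈ (⊥ : Submodule K F) ∧ x ≠ 0) = ∅ := by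
          ext x; simp only [Finset.mem_filter, Finset.mem_univ, true_and,
            Submodule.mem_bot, Finset.notMem_empty, iff_false]
          tauto
        rw [hh, Finset.prod_empty, one_pow]
    | succ k ih =>
      intro hk1
      obtain ⟨S, hST, hSmul, hScard, z, hzT, hz0, hτ⟩ :=
        ih ((Nat.mul_le_mul_left e (Nat.le_succ k)).trans hk1)
      have heke : e * k + e ≤ n := by
        have : e * (k+1) = e * k + e := by ring
        omega
      -- pick v in T not in S
      have hlt : (Finset.univ.filter (fun x : F => x ∈ S)).card
          < (Finset.univ.filter (fun x : F => x ^ (q ^ n) = x)).card := by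
        rw [hScard, hcard_n]
        exact Nat.pow_lt_pow_right hq1 (by omega)
      have hnotsub : ¬ (Finset.univ.filter (fun x : F => x ^ (q ^ n) = x)
          ⊆ Finset.univ.filter (fun x : F => x ∈ S)) := by
        intro hsub
        exact absurd (Finset.card_le_card hsub) (by omega)
      obtain ⟨v, hvT', hvS'⟩ := Finset.not_subset.mp hnotsub
      have hvT : v ^ (q ^ n) = v := (Finset.mem_filter.mp hvT').2
      have hvS : v ∉ S := fun hc => hvS' (Finset.mem_filter.mpr ⟨Finset.mem_univ _, hc⟩)
      -- the new submodule
      let S' : Submodule K F :=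
        { carrier := {x : F | ∃ a, a ∈ S ∧ ∃ c : F, c ^ (q ^ e) = c ∧ x = a + c * v}
          add_mem' := by
            rintro x y ⟨a, ha, c, hc, rfl⟩ ⟨a', ha', c', hc', rfl⟩
            refine ⟨a + a', S.add_mem ha ha', c + c', ?_, by ring⟩
            rw [hfrob e, hc, hc']
          zero_mem' := ⟨0, S.zero_mem, 0, by rw [zero_pow hqe0], by ring⟩
          smul_mem' := by
            intro r x hx
            obtain ⟨a, ha, c, hc, rfl⟩ := hx
            refine ⟨r • a, S.smul_mem r ha, (algebraMap K F r) * c, ?_, ?_⟩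
            · rw [mul_pow, hc, halg e r]
            · rw [smul_add, Algebra.smul_def, Algebra.smul_def]; ring }
      have hmemS' : ∀ x : F, x ∈ S' ↔ ∃ a, a ∈ S ∧ ∃ c : F, c ^ (q ^ e) = c ∧ x = a + c * v :=
        fun x => Iff.rfl
      -- injectivity of the parametrization
      have hinj : ∀ a c a' c' : F, a ∈ S → a' ∈ S → c ^ (q ^ e) = c → c' ^ (q ^ e) = c' →
          a + c * v = a' + c' * v → a = a' ∧ c = c' := by
        intro a c a' c' ha ha' hc hc' heq
        by_cases hcc : c = c'
        · subst hcc
          constructor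
          · have := add_right_cancel heq; exact this
          · rfl
        · exfalso
          have hsubc : (c - c') ^ (q ^ e) = c - c' := by
            rw [hsub c c', hfrob e, hc, hc']
          have hcc0 : c - c' ≠ 0 := sub_ne_zero.mpr hcc
          have hveq : v = (c - c')⁻¹ * (a' - a) := by
            field_simp
            linear_combination heq
          have hvmem : v ∈ S := by
            rw [hveq]
            exact hSmul _ _ (hTeinv _ hsubc) (S.sub_mem ha' ha)
          exact hvS hvmem
      -- membership of the parametrization
      have hmaps : ∀ p : F × F, p ∈ (Finset.univ.filter (fun x : F => x ∈ S)) ×ˢ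
          (Finset.univ.filter (fun c : F => c ^ (q ^ e) = c)) →
          p.1 + p.2 * v ∈ Finset.univ.filter (fun x : F => x ∈ S') := by
        rintro ⟨a, c⟩ hp
        rw [Finset.mem_product, Finset.mem_filter, Finset.mem_filter] at hp
        exact Finset.mem_filter.mpr ⟨Finset.mem_univ _, ⟨a, hp.1.2, c, hp.2.2, rfl⟩⟩
      have hinj' : ∀ (p₁ : F × F) (h₁ : p₁ ∈ (Finset.univ.filter (fun x : F => x ∈ S)) ×ˢ
            (Finset.univ.filter (fun c : F => c ^ (q ^ e) = c)))
          (p₂ : F × F) (h₂ : p₂ ∈ (Finset.univ.filter (fun x : F => x ∈ S)) ×ˢ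
            (Finset.univ.filter (fun c : F => c ^ (q ^ e) = c))),
          p₁.1 + p₁.2 * v = p₂.1 + p₂.2 * v → p₁ = p₂ := by
        rintro ⟨a, c⟩ h₁ ⟨a', c'⟩ h₂ heq
        rw [Finset.mem_product, Finset.mem_filter, Finset.mem_filter] at h₁ h₂
        obtain ⟨he1', he2'⟩ := hinj a c a' c' h₁.1.2 h₂.1.2 h₁.2.2 h₂.2.2 heq
        exact Prod.ext he1' he2'
      have hsurj : ∀ x ∈ Finset.univ.filter (fun x : F => x ∈ S'),
          ∃ p : F × F, ∃ _ : p ∈ (Finset.univ.filter (fun x : F => x ∈ S)) ×ˢ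
            (Finset.univ.filter (fun c : F => c ^ (q ^ e) = c)), p.1 + p.2 * v = x := by
        intro x hx
        obtain ⟨a, ha, c, hc, rfl⟩ := (Finset.mem_filter.mp hx).2
        refine ⟨(a, c), ?_, rfl⟩
        rw [Finset.mem_product, Finset.mem_filter, Finset.mem_filter]
        exact ⟨⟨Finset.mem_univ _, ha⟩, ⟨Finset.mem_univ _, hc⟩⟩
      -- cardinality
      have hcardS' : (Finset.univ.filter (fun x : F => x ∈ S')).card = q ^ (e * (k + 1)) := by
        have hc1 : ((Finset.univ.filter (fun x : F => x ∈ S)) ×ˢ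
            (Finset.univ.filter (fun c : F => c ^ (q ^ e) = c))).card
            = (Finset.univ.filter (fun x : F => x ∈ S')).card :=
          Finset.card_bij (fun p _ => p.1 + p.2 * v) hmaps hinj' hsurj
        rw [← hc1, Finset.card_product, hScard, hcard_e, ← pow_add]
        congr 1
      -- closure properties
      have hS'T : ∀ x ∈ S', x ^ (q ^ n) = x := by
        rintro x ⟨a, ha, c, hc, rfl⟩
        rw [hfrob n, mul_pow, hST a ha, heTn c hc, hvT]
      have hS'mul : ∀ c x : F, c ^ (q ^ e) = c → x ∈ S' → c * x ∈ S' := by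
        rintro c₀ x hc₀ ⟨a, ha, c, hc, rfl⟩
        refine ⟨c₀ * a, hSmul c₀ a hc₀ ha, c₀ * c, by rw [mul_pow, hc₀, hc], by ring⟩
      -- L
      set L : F := ∏ a ∈ Finset.univ.filter (fun x : F => x ∈ S), (a + v) with hLdef
      have hL0 : L ≠ 0 := by
        rw [hLdef]
        apply Finset.prod_ne_zero_iff.mpr
        intro a ha hzero
        apply hvS
        have hveq : v = -a := eq_neg_of_add_eq_zero_right hzero
        rw [hveq]; exact S.neg_mem (Finset.mem_filter.mp ha).2
      have hLT : L ^ (q ^ n) = L := by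
        rw [hLdef, ← Finset.prod_pow]
        apply Finset.prod_congr rfl
        intro a ha
        rw [hfrob n, hST a (Finset.mem_filter.mp ha).2, hvT]
      refine ⟨S', hS'T, hS'mul, hcardS', z * L, by rw [mul_pow, hzT, hLT],
        mul_ne_zero hz0 hL0, ?_⟩
      -- now the tau computation
      have hA : Finset.univ.filter (fun x : F => x ∈ S' ∧ x ≠ 0)
          = (Finset.univ.filter (fun x : F => x ∈ S')).erase 0 := by
        ext x
        simp only [Finset.mem_filter, Finset.mem_erase, Finset.mem_univ, true_and]
        tauto
      have h0Te : (0:F) ^ (q ^ e) = 0 := zero_pow hqe0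
      have h00 : ((0:F), (0:F)) ∈ (Finset.univ.filter (fun x : F => x ∈ S)) ×ˢ
          (Finset.univ.filter (fun c : F => c ^ (q ^ e) = c)) := by
        rw [Finset.mem_product, Finset.mem_filter, Finset.mem_filter]
        exact ⟨⟨Finset.mem_univ _, S.zero_mem⟩, ⟨Finset.mem_univ _, h0Te⟩⟩
      have htrans : ∏ x ∈ (Finset.univ.filter (fun x : F => x ∈ S')).erase 0, x
          = ∏ p ∈ (((Finset.univ.filter (fun x : F => x ∈ S)) ×ˢ
              (Finset.univ.filter (fun c : F => c ^ (q ^ e) = c))).erase ((0:F),(0:F))),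
              (p.1 + p.2 * v) := by
        symm
        apply Finset.prod_bij (fun p (_ : p ∈ _) => p.1 + p.2 * v)
        · rintro ⟨a, c⟩ hp
          rw [Finset.mem_erase] at hp
          have hm := hmaps (a, c) hp.2
          rw [Finset.mem_filter] at hm
          rw [Finset.mem_erase]
          refine ⟨?_, Finset.mem_filter.mpr ⟨Finset.mem_univ _, hm.2⟩⟩
          intro hzero
          rw [Finset.mem_product, Finset.mem_filter, Finset.mem_filter] at hp
          have hzero' : a + c * v = (0:F) + (0:F) * v := by rw [hzero]; ring
          obtain ⟨ha0, hc0⟩ := hinj a c 0 0 (hp.2).1.2 S.zero_mem (hp.2).2.2 h0Te hzero'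
          exact hp.1 (by rw [ha0, hc0])
        · rintro ⟨a, c⟩ h₁ ⟨a', c'⟩ h₂ heq
          rw [Finset.mem_erase] at h₁ h₂
          exact hinj' (a, c) h₁.2 (a', c') h₂.2 heq
        · intro x hx
          rw [Finset.mem_erase] at hx
          obtain ⟨p, hp, rfl⟩ := hsurj x hx.2
          refine ⟨p, Finset.mem_erase.mpr ⟨?_, hp⟩, rfl⟩
          rintro rfl
          exact hx.1 (by ring)
        · intro p _; rfl
      have hsplitset : ((Finset.univ.filter (fun x : F => x ∈ S)) ×ˢ
              (Finset.univ.filter (fun c : F => c ^ (q ^ e) = c))).erase ((0:F),(0:F))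
          = (((Finset.univ.filter (fun x : F => x ∈ S)).erase 0) ×ˢ ({(0:F)} : Finset F))
            ∪ ((Finset.univ.filter (fun x : F => x ∈ S)) ×ˢ
              ((Finset.univ.filter (fun c : F => c ^ (q ^ e) = c)).erase 0)) := by
        ext ⟨a, c⟩
        constructor
        · intro h
          rw [Finset.mem_erase, Finset.mem_product, Finset.mem_filter, Finset.mem_filter] at h
          obtain ⟨hne, ⟨-, ha⟩, -, hc⟩ := h
          rw [Finset.mem_union]
          by_cases hc0 : c = 0
          · subst hc0
            left
            rw [Finset.mem_product, Finset.mem_erase, Finset.mem_filter, Finset.mem_singleton]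
            refine ⟨⟨?_, Finset.mem_univ _, ha⟩, rfl⟩
            rintro rfl
            exact hne rfl
          · right
            rw [Finset.mem_product, Finset.mem_erase, Finset.mem_filter, Finset.mem_filter]
            exact ⟨⟨Finset.mem_univ _, ha⟩, hc0, Finset.mem_univ _, hc⟩
        · intro h
          rw [Finset.mem_erase, Finset.mem_product, Finset.mem_filter, Finset.mem_filter]
          rcases Finset.mem_union.mp h with h | h
          · rw [Finset.mem_product, Finset.mem_erase, Finset.mem_filter,
              Finset.mem_singleton] at h
            obtain ⟨⟨ha0, -, ha⟩, rfl⟩ := h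
            refine ⟨?_, ⟨Finset.mem_univ _, ha⟩, Finset.mem_univ _, h0Te⟩
            intro hcon
            exact ha0 (congrArg Prod.fst hcon)
          · rw [Finset.mem_product, Finset.mem_erase, Finset.mem_filter,
              Finset.mem_filter] at h
            obtain ⟨⟨-, ha⟩, hc0, -, hc⟩ := h
            refine ⟨?_, ⟨Finset.mem_univ _, ha⟩, Finset.mem_univ _, hc⟩
            intro hcon
            exact hc0 (congrArg Prod.snd hcon)
      have hdisj : Disjoint
          ((((Finset.univ.filter (fun x : F => x ∈ S)).erase 0) ×ˢ ({(0:F)} : Finset F)))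
          ((Finset.univ.filter (fun x : F => x ∈ S)) ×ˢ
              ((Finset.univ.filter (fun c : F => c ^ (q ^ e) = c)).erase 0)) := by
        rw [Finset.disjoint_left]
        rintro ⟨a, c⟩ h1 h2
        rw [Finset.mem_product, Finset.mem_singleton] at h1
        rw [Finset.mem_product, Finset.mem_erase] at h2
        exact h2.2.1 h1.2
      have hfirst : ∏ p ∈ (((Finset.univ.filter (fun x : F => x ∈ S)).erase 0)
            ×ˢ ({(0:F)} : Finset F)), (p.1 + p.2 * v)
          = z ^ (q ^ e - 1) := by
        rw [Finset.prod_product' _ _ (fun x y => x + y * v)]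
        have : ∀ a ∈ (Finset.univ.filter (fun x : F => x ∈ S)).erase 0,
            (∏ y ∈ ({(0:F)} : Finset F), (a + y * v)) = a := by
          intro a _
          rw [Finset.prod_singleton, zero_mul, add_zero]
        rw [Finset.prod_congr rfl this]
        rw [← hτ]
        apply Finset.prod_congr _ (fun _ _ => rfl)
        ext x
        simp only [Finset.mem_filter, Finset.mem_erase, Finset.mem_univ, true_and]
        tauto
      have hTecard : ((Finset.univ.filter (fun c : F => c ^ (q ^ e) = c)).erase 0).card
          = q ^ e - 1 := by
        have h0mem : (0:F) ∈ Finset.univ.filter (fun c : F => c ^ (q ^ e) = c) :=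
          Finset.mem_filter.mpr ⟨Finset.mem_univ _, h0Te⟩
        rw [Finset.card_erase_of_mem h0mem, hcard_e]
      have hprodc : ∏ c ∈ (Finset.univ.filter (fun c : F => c ^ (q ^ e) = c)).erase 0, c = 1 := by
        rw [← prod_filter_pow_eq_one h2 (q ^ e)]
        apply Finset.prod_congr _ (fun _ _ => rfl)
        ext x
        simp only [Finset.mem_filter, Finset.mem_erase, Finset.mem_univ, true_and]
        tauto
      have hsecond : ∏ p ∈ ((Finset.univ.filter (fun x : F => x ∈ S)) ×ˢ
            ((Finset.univ.filter (fun c : F => c ^ (q ^ e) = c)).erase 0)), (p.1 + p.2 * v)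
          = L ^ (q ^ e - 1) := by
        rw [Finset.prod_product_right' _ _ (fun x y => x + y * v)]
        have hstep : ∀ c ∈ (Finset.univ.filter (fun c : F => c ^ (q ^ e) = c)).erase 0,
            (∏ a ∈ Finset.univ.filter (fun x : F => x ∈ S), (a + c * v)) = c * L := by
          intro c hc'
          rw [Finset.mem_erase, Finset.mem_filter] at hc'
          obtain ⟨hc0, -, hc⟩ := hc'
          have hre : ∏ a ∈ Finset.univ.filter (fun x : F => x ∈ S), (c * a + c * v)
              = ∏ a ∈ Finset.univ.filter (fun x : F => x ∈ S), (a + c * v) := by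
            apply Finset.prod_bij (fun a (_ : a ∈ _) => c * a)
            · intro a ha
              rw [Finset.mem_filter] at ha ⊢
              exact ⟨Finset.mem_univ _, hSmul c a hc ha.2⟩
            · intro a₁ _ a₂ _ heq
              exact mul_left_cancel₀ hc0 heq
            · intro a ha
              rw [Finset.mem_filter] at ha
              refine ⟨c⁻¹ * a, Finset.mem_filter.mpr
                ⟨Finset.mem_univ _, hSmul c⁻¹ a (hTeinv c hc) ha.2⟩, ?_⟩
              field_simp
            · intro a _; rfl
          have hcpow : c ^ ((Finset.univ.filter (fun x : F => x ∈ S)).card) = c := by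
            rw [hScard, pow_mul]
            exact pow_pow_fix k hc
          calc ∏ a ∈ Finset.univ.filter (fun x : F => x ∈ S), (a + c * v)
              = ∏ a ∈ Finset.univ.filter (fun x : F => x ∈ S), (c * a + c * v) := hre.symm
            _ = ∏ a ∈ Finset.univ.filter (fun x : F => x ∈ S), (c * (a + v)) := by
                apply Finset.prod_congr rfl; intro a _; ring
            _ = c ^ ((Finset.univ.filter (fun x : F => x ∈ S)).card) * L := by
                rw [Finset.prod_mul_distrib, Finset.prod_const, hLdef]
            _ = c * L := by rw [hcpow]
        rw [Finset.prod_congr rfl hstep, Finset.prod_mul_distrib, Finset.prod_const,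
          hprodc, one_mul, hTecard]
      rw [hA, htrans, hsplitset, Finset.prod_union hdisj, hfirst, hsecond, mul_pow]
  -- use the flag at k₀ = d / e
  have hk0 : e * (d / e) = d := Nat.mul_div_cancel' hed
  obtain ⟨S₀, hS₀T, hS₀mul, hS₀card, z, hzT, hz0, hτ₀⟩ := flag (d / e) (by rw [hk0]; exact hdn)
  obtain ⟨t, u, htu⟩ := exists_tu q d n hq2 hn
  rw [hk0] at hS₀card
  -- z has multiplicative order dividing q^n - 1
  have hzpow1 : z ^ (q ^ n - 1) = 1 := by
    have hqn1 : 1 ≤ q ^ n := Nat.one_le_pow _ _ (by omega)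
    have h1 : z * z ^ (q ^ n - 1) = z * 1 := by
      rw [mul_one, ← pow_succ', Nat.sub_add_cancel hqn1]
      exact hzT
    exact mul_left_cancel₀ hz0 h1
  set lam : F := z ^ t with hlamdef
  have hlam0 : lam ≠ 0 := pow_ne_zero _ hz0
  have hlamT : lam ^ (q ^ n) = lam := by
    rw [hlamdef, ← pow_mul, mul_comm, pow_mul, hzT]
  refine ⟨Submodule.map (LinearMap.mulLeft K lam) S₀, ?_, ?_, ?_⟩
  · rintro x hx
    rw [Submodule.mem_map] at hx
    obtain ⟨y, hy, rfl⟩ := hx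
    rw [LinearMap.mulLeft_apply, mul_pow, hlamT, hS₀T y hy]
  · rw [← hS₀card]
    symm
    apply Finset.card_bij (fun y _ => lam * y)
    · intro y hy
      rw [Finset.mem_filter] at hy ⊢
      exact ⟨Finset.mem_univ _, Submodule.mem_map.mpr ⟨y, hy.2, by rw [LinearMap.mulLeft_apply]⟩⟩
    · intro y₁ h₁ y₂ h₂ heq
      exact mul_left_cancel₀ hlam0 heq
    · intro x hx
      rw [Finset.mem_filter] at hx
      obtain ⟨y, hy, rfl⟩ := Submodule.mem_map.mp hx.2
      exact ⟨y, Finset.mem_filter.mpr ⟨Finset.mem_univ _, hy⟩, by rw [LinearMap.mulLeft_apply]⟩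
  · -- the product
    have htransfer : (∏ x ∈ Finset.univ.filter
          (fun x : F => x ∈ Submodule.map (LinearMap.mulLeft K lam) S₀ ∧ x ≠ 0), x)
        = ∏ y ∈ Finset.univ.filter (fun y : F => y ∈ S₀ ∧ y ≠ 0), (lam * y) := by
      symm
      apply Finset.prod_bij (fun y _ => lam * y)
      · intro y hy
        rw [Finset.mem_filter] at hy ⊢
        exact ⟨Finset.mem_univ _,
          Submodule.mem_map.mpr ⟨y, hy.2.1, by rw [LinearMap.mulLeft_apply]⟩,
          mul_ne_zero hlam0 hy.2.2⟩
      · intro y₁ h₁ y₂ h₂ heq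
        exact mul_left_cancel₀ hlam0 heq
      · intro x hx
        rw [Finset.mem_filter] at hx
        obtain ⟨-, hmap, hne⟩ := hx
        obtain ⟨y, hy, rfl⟩ := Submodule.mem_map.mp hmap
        rw [LinearMap.mulLeft_apply] at hne ⊢
        refine ⟨y, Finset.mem_filter.mpr ⟨Finset.mem_univ _, hy, ?_⟩, rfl⟩
        rintro rfl; exact hne (by rw [mul_zero])
      · intro y _
        rfl
    rw [htransfer, Finset.prod_mul_distrib, Finset.prod_const, hτ₀]
    have hcard' : (Finset.univ.filter (fun y : F => y ∈ S₀ ∧ y ≠ 0)).card = q ^ d - 1 := by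
      have hzero : (0:F) ∈ Finset.univ.filter (fun y : F => y ∈ S₀) :=
        Finset.mem_filter.mpr ⟨Finset.mem_univ _, Submodule.zero_mem _⟩
      have hset : Finset.univ.filter (fun y : F => y ∈ S₀ ∧ y ≠ 0)
          = (Finset.univ.filter (fun y : F => y ∈ S₀)).erase 0 := by
        ext y
        simp only [Finset.mem_filter, Finset.mem_erase, Finset.mem_univ, true_and]
        tauto
      rw [hset, Finset.card_erase_of_mem hzero, hS₀card]
    rw [← hedef] at htu
    rw [hcard', hlamdef, ← pow_mul, ← pow_add, mul_comm t (q ^ d - 1), htu,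
      mul_comm u (q ^ n - 1), pow_mul, hzpow1, one_pow]

set_option maxHeartbeats 1000000 in
/-- For `q = 2^s`, `ℓ` even, and `ℓ/2 ≤ m ≤ ℓ`, there exists an `m`-dimensional
`F_q`-subspace `W` of `F_{q^ℓ}` satisfying (P1) `τ_W ∈ F_q` and
(P2) `L_W(L_W(α)) = 0` for all `α ∈ F_{q^ℓ}`. -/
theorem statement12 {K F : Type*} [Field K] [Field F] [Fintype K] [Fintype F] [Algebra K F]
    (q ℓ m : ℕ) (hq : Fintype.card K = q) (hq2 : ∃ s : ℕ, 1 ≤ s ∧ q = 2 ^ s)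
    (hℓ : Module.finrank K F = ℓ) (hℓeven : 2 ∣ ℓ)
    (hm1 : ℓ / 2 ≤ m) (hmℓ : m ≤ ℓ) :
    ∃ W : Submodule K F, Module.finrank K W = m ∧
      (∏ w ∈ Finset.univ.filter (fun w : F => w ∈ W ∧ w ≠ 0), w) ∈
        Set.range (algebraMap K F) ∧
      ∀ α : F,
        (∏ w ∈ Finset.univ.filter (fun w : F => w ∈ W),
          ((∏ w' ∈ Finset.univ.filter (fun w' : F => w' ∈ W), (α - w')) - w)) = 0 := by
  obtain ⟨s, hs1, hqs⟩ := hq2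
  have hq2' : 2 ≤ q := by
    have h1 : 2 ^ 1 ≤ 2 ^ s := Nat.pow_le_pow_right (by norm_num) hs1
    rw [pow_one] at h1
    omega
  -- characteristic 2
  haveI hcharK : CharP K 2 := by
    haveI := ringChar.charP K
    obtain ⟨f, hp, hcard⟩ := FiniteField.card K (ringChar K)
    have hpf : ringChar K = 2 := by
      have hdvd : ringChar K ∣ 2 ^ s := by
        rw [← hqs, ← hq, hcard]
        exact dvd_pow_self _ (by exact_mod_cast f.ne_zero)
      have := hp.dvd_of_dvd_pow (n := s) hdvd
      exact (Nat.prime_dvd_prime_iff_eq hp Nat.prime_two).mp this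
    rw [← hpf]
    exact ringChar.charP K
  haveI hcharF : CharP F 2 := charP_of_injective_algebraMap (algebraMap K F).injective 2
  have h2 : ∀ a : F, a + a = 0 := CharTwo.add_self_eq_zero
  have hsub : ∀ x y : F, x - y = x + y := fun x y => CharTwo.sub_eq_add x y
  -- dimensions
  obtain ⟨n, hℓ2n⟩ := hℓeven
  have hcardF : Fintype.card F = q ^ ℓ := by rw [← hq, ← hℓ]; exact Module.card_eq_pow_finrank
  have hF2 : 1 < Fintype.card F := Fintype.one_lt_card
  have hl1 : 1 ≤ ℓ := by
    by_contra hc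
    push_neg at hc
    interval_cases ℓ
    · rw [pow_zero] at hcardF; omega
  have hn1 : 1 ≤ n := by omega
  have hnm : n ≤ m := by
    rw [hℓ2n, Nat.mul_div_cancel_left n (by norm_num)] at hm1
    exact hm1
  set d := m - n with hddef
  have hmnd : m = n + d := by omega
  have hdn : d ≤ n := by omega
  -- the small subspace S
  obtain ⟨S, hST, hScard, hSτ⟩ := S_exists q n d s hq hqs hq2' h2
    (by rw [hcardF, hℓ2n]) hn1 hdn
  -- notation
  set Q := q ^ n with hQdef
  have hQ2 : 2 ≤ Q := by
    have h1 : q ^ 1 ≤ q ^ n := Nat.pow_le_pow_right (by omega) hn1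
    rw [pow_one] at h1; omega
  have hQcard : Fintype.card F = Q * Q := by
    rw [hcardF, hℓ2n, hQdef, ← pow_add]
    congr 1
    ring
  have hfrobQ : ∀ x y : F, (x + y) ^ Q = x ^ Q + y ^ Q := by
    intro x y
    have hQ2pow : Q = 2 ^ (s * n) := by rw [hQdef, hqs, ← pow_mul]
    rw [hQ2pow]
    exact two_pow_add' h2 _ x y
  have hQQ : ∀ x : F, x ^ (Q * Q) = x := by
    intro x
    rw [← hQcard]
    exact FiniteField.pow_card x
  have hKfix : ∀ r : K, r ^ Q = r := by
    intro r; rw [hQdef, ← hq]; exact FiniteField.pow_card_pow n r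
  -- the linear map x ↦ x^Q + x
  set fL : F →ₗ[K] F :=
    { toFun := fun x => x ^ Q + x
      map_add' := by
        intro x y
        show (x + y) ^ Q + (x + y) = (x ^ Q + x) + (y ^ Q + y)
        rw [hfrobQ]
        ring
      map_smul' := by
        intro r x
        simp only [RingHom.id_apply]
        show (r • x) ^ Q + (r • x) = r • (x ^ Q + x)
        rw [Algebra.smul_def, Algebra.smul_def, mul_pow, ← map_pow, hKfix]
        ring } with hfLdef
  have hfL : ∀ x : F, fL x = x ^ Q + x := fun _ => rfl
  -- basic equivalences
  have hTiff : ∀ x : F, x ^ Q + x = 0 ↔ x ^ Q = x := by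
    intro x
    constructor
    · intro h
      have h' : x ^ Q + x + x = 0 + x := by rw [h]
      rwa [add_assoc, h2, add_zero, zero_add] at h'
    · intro h; rw [h]; exact h2 x
  have himT : ∀ x : F, (fL x) ^ Q = fL x := by
    intro x
    rw [hfL, hfrobQ, ← pow_mul, hQQ]
    exact add_comm _ _
  -- cardinality of T
  have hcardT : (Finset.univ.filter fun x : F => x ^ Q = x).card = Q := by
    refine card_filter_pow_eq Q hQ2 ?_
    rw [hQcard]
    have hQ1 : 1 ≤ Q := by omega
    refine ⟨Q + 1, ?_⟩
    zify [hQ1, Nat.one_le_iff_ne_zero.mpr (by positivity : Q * Q ≠ 0)]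
    ring
  -- range fL = ker fL
  have hrange : LinearMap.range fL = LinearMap.ker fL := by
    have hle : LinearMap.range fL ≤ LinearMap.ker fL := by
      rintro y ⟨x, rfl⟩
      rw [LinearMap.mem_ker, hfL]
      rw [(hTiff (fL x)).mpr (himT x)]
    have hkerfilter : (Finset.univ.filter fun x : F => x ∈ LinearMap.ker fL)
        = (Finset.univ.filter fun x : F => x ^ Q = x) := by
      ext x
      simp only [Finset.mem_filter, Finset.mem_univ, true_and, LinearMap.mem_ker, hfL]
      exact hTiff x
    have hcardker : Fintype.card ↥(LinearMap.ker fL) = Q := by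
      rw [Fintype.card_of_subtype (Finset.univ.filter fun x : F => x ∈ LinearMap.ker fL)
        (fun x => by simp), hkerfilter, hcardT]
    have hfrker : Module.finrank K ↥(LinearMap.ker fL) = n := by
      apply Nat.pow_right_injective hq2'
      show q ^ Module.finrank K ↥(LinearMap.ker fL) = q ^ n
      rw [← hq, ← Module.card_eq_pow_finrank, hcardker, hq, hQdef]
    have hfrrange : Module.finrank K ↥(LinearMap.range fL) = n := by
      have hrn := LinearMap.finrank_range_add_finrank_ker fL
      rw [hℓ, hℓ2n, hfrker] at hrn
      omega
    exact Submodule.eq_of_le_of_finrank_le hle (by rw [hfrker, hfrrange])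
  -- polynomial identity
  have hpoly : ∀ u : F,
      (∏ t ∈ Finset.univ.filter (fun x : F => x ^ Q = x), (u - t)) = u ^ Q - u := by
    have hmonicg : (∏ t ∈ Finset.univ.filter (fun x : F => x ^ Q = x),
        (X - C t) : F[X]).Monic :=
      Polynomial.monic_prod_of_monic _ _ (fun t _ => Polynomial.monic_X_sub_C t)
    have hdegg : (∏ t ∈ Finset.univ.filter (fun x : F => x ^ Q = x),
        (X - C t) : F[X]).natDegree = Q := by
      rw [Polynomial.natDegree_prod _ _ (fun t _ => Polynomial.X_sub_C_ne_zero t)]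
      simp only [Polynomial.natDegree_X_sub_C]
      rw [Finset.sum_const, hcardT, smul_eq_mul, mul_one]
    have hmonicf : (X ^ Q - X : F[X]).Monic := by
      apply Polynomial.monic_X_pow_sub
      rw [Polynomial.degree_X]
      exact_mod_cast hQ2
    have hdegf : (X ^ Q - X : F[X]).natDegree = Q :=
      FiniteField.X_pow_card_sub_X_natDegree_eq F hQ2
    have heqpoly : (X ^ Q - X : F[X])
        = ∏ t ∈ Finset.univ.filter (fun x : F => x ^ Q = x), (X - C t) := by
      apply Polynomial.eq_of_degree_sub_lt_of_eval_finset_eq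
        (Finset.univ.filter (fun x : F => x ^ Q = x))
      · have hlt := Polynomial.degree_sub_lt
          (p := (X ^ Q - X : F[X]))
          (q := ∏ t ∈ Finset.univ.filter (fun x : F => x ^ Q = x), (X - C t))
          (by rw [Polynomial.degree_eq_natDegree hmonicf.ne_zero,
                Polynomial.degree_eq_natDegree hmonicg.ne_zero, hdegf, hdegg])
          hmonicf.ne_zero
          (by rw [hmonicf.leadingCoeff, hmonicg.leadingCoeff])
        rw [Polynomial.degree_eq_natDegree hmonicf.ne_zero, hdegf] at hlt
        rwa [hcardT]
      · intro x hx
        rw [Finset.mem_filter] at hx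
        rw [Polynomial.eval_sub, Polynomial.eval_pow, Polynomial.eval_X, hx.2, sub_self]
        symm
        rw [Polynomial.eval_prod]
        have hxmem : x ∈ Finset.univ.filter (fun x : F => x ^ Q = x) :=
          Finset.mem_filter.mpr ⟨Finset.mem_univ _, hx.2⟩
        apply Finset.prod_eq_zero hxmem
        rw [Polynomial.eval_sub, Polynomial.eval_X, Polynomial.eval_C, sub_self]
    intro u
    have := congrArg (Polynomial.eval u) heqpoly
    rw [Polynomial.eval_sub, Polynomial.eval_pow, Polynomial.eval_X, Polynomial.eval_prod] at this
    rw [this]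
    apply Finset.prod_congr rfl
    intro t _
    rw [Polynomial.eval_sub, Polynomial.eval_X, Polynomial.eval_C]
  -- W and its membership
  have hWmem : ∀ x : F, x ∈ Submodule.comap fL S ↔ fL x ∈ S := fun x => Submodule.mem_comap
  have hTW : ∀ x : F, x ^ Q = x → x ∈ Submodule.comap fL S := by
    intro x hx
    have hfx : fL x = 0 := by rw [hfL]; exact (hTiff x).mpr hx
    rw [hWmem, hfx]
    exact S.zero_mem
  have hpreim : ∀ y ∈ S, ∃ w₀ : F, fL w₀ = y := by
    intro y hy
    have hymem : y ∈ LinearMap.range fL := by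
      rw [hrange, LinearMap.mem_ker, hfL]
      exact (hTiff y).mpr (hST y hy)
    exact hymem
  -- fiber transfer
  have hfLzero : ∀ t : F, t ^ Q = t → fL t = 0 := by
    intro t ht; rw [hfL]; exact (hTiff t).mpr ht
  have hfiberprod : ∀ (y w₀ : F), fL w₀ = y → ∀ g : F → F,
      (∏ w ∈ Finset.univ.filter (fun w : F => fL w = y), g w)
        = ∏ t ∈ Finset.univ.filter (fun x : F => x ^ Q = x), g (w₀ + t) := by
    intro y w₀ hw₀ g
    symm
    apply Finset.prod_bij (fun t (_ : t ∈ Finset.univ.filter (fun x : F => x ^ Q = x)) => w₀ + t)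
    · intro t ht
      rw [Finset.mem_filter] at ht ⊢
      refine ⟨Finset.mem_univ _, ?_⟩
      rw [map_add, hw₀, hfLzero t ht.2, add_zero]
    · intro t₁ _ t₂ _ heq
      exact add_left_cancel heq
    · intro w hw
      rw [Finset.mem_filter] at hw
      refine ⟨w - w₀, ?_, by rw [add_sub_cancel]⟩
      rw [Finset.mem_filter]
      refine ⟨Finset.mem_univ _, ?_⟩
      have hfLt : fL (w - w₀) = 0 := by rw [map_sub, hw.2, hw₀, sub_self]
      rw [hfL] at hfLt
      exact (hTiff _).mp hfLt
    · intro t _; rfl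
  have hfibercard : ∀ (y w₀ : F), fL w₀ = y →
      (Finset.univ.filter (fun w : F => fL w = y)).card = Q := by
    intro y w₀ hw₀
    rw [← hcardT]
    symm
    apply Finset.card_bij (fun t (_ : t ∈ Finset.univ.filter (fun x : F => x ^ Q = x)) => w₀ + t)
    · intro t ht
      rw [Finset.mem_filter] at ht ⊢
      refine ⟨Finset.mem_univ _, ?_⟩
      rw [map_add, hw₀, hfLzero t ht.2, add_zero]
    · intro t₁ _ t₂ _ heq
      exact add_left_cancel heq
    · intro w hw
      rw [Finset.mem_filter] at hw
      refine ⟨w - w₀, ?_, by rw [add_sub_cancel]⟩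
      rw [Finset.mem_filter]
      refine ⟨Finset.mem_univ _, ?_⟩
      have hfLt : fL (w - w₀) = 0 := by rw [map_sub, hw.2, hw₀, sub_self]
      rw [hfL] at hfLt
      exact (hTiff _).mp hfLt
  have hmaps : ∀ w ∈ Finset.univ.filter (fun w : F => w ∈ Submodule.comap fL S),
      fL w ∈ Finset.univ.filter (fun y : F => y ∈ S) := by
    intro w hw
    rw [Finset.mem_filter] at hw ⊢
    exact ⟨Finset.mem_univ _, (hWmem w).mp hw.2⟩
  have hfibereq : ∀ y : F, y ∈ S →
      (Finset.univ.filter (fun w : F => w ∈ Submodule.comap fL S)).filter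
        (fun w => fL w = y) = Finset.univ.filter (fun w : F => fL w = y) := by
    intro y hy
    ext w
    simp only [Finset.mem_filter, Finset.mem_univ, true_and]
    constructor
    · rintro ⟨-, h⟩; exact h
    · intro h
      exact ⟨(hWmem w).mpr (by rw [h]; exact hy), h⟩
  -- cardinality of W
  have hcardW : (Finset.univ.filter (fun w : F => w ∈ Submodule.comap fL S)).card = q ^ m := by
    rw [Finset.card_eq_sum_card_fiberwise hmaps]
    have hper : ∀ y ∈ Finset.univ.filter (fun y : F => y ∈ S),
        ((Finset.univ.filter (fun w : F => w ∈ Submodule.comap fL S)).filter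
          (fun w => fL w = y)).card = Q := by
      intro y hy
      rw [Finset.mem_filter] at hy
      obtain ⟨w₀, hw₀⟩ := hpreim y hy.2
      rw [hfibereq y hy.2]
      exact hfibercard y w₀ hw₀
    rw [Finset.sum_congr rfl hper, Finset.sum_const, hScard, smul_eq_mul, hQdef, ← pow_add,
      hmnd, add_comm]
  have hfinrankW : Module.finrank K ↥(Submodule.comap fL S) = m := by
    apply Nat.pow_right_injective hq2'
    show q ^ Module.finrank K ↥(Submodule.comap fL S) = q ^ m
    rw [← hq, ← Module.card_eq_pow_finrank,
      Fintype.card_of_subtype (Finset.univ.filter (fun w : F => w ∈ Submodule.comap fL S))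
        (fun x => by simp), hcardW, hq]
  -- first product identity for P2
  have hH1 : ∀ x : F,
      (∏ w ∈ Finset.univ.filter (fun w : F => w ∈ Submodule.comap fL S), (x - w))
        = ∏ y ∈ Finset.univ.filter (fun y : F => y ∈ S), (fL x - y) := by
    intro x
    rw [← Finset.prod_fiberwise_of_maps_to hmaps (fun w => x - w)]
    apply Finset.prod_congr rfl
    intro y hy
    rw [Finset.mem_filter] at hy
    obtain ⟨w₀, hw₀⟩ := hpreim y hy.2
    rw [hfibereq y hy.2, hfiberprod y w₀ hw₀ (fun w => x - w)]
    have hstep : ∀ t : F, x - (w₀ + t) = (x - w₀) - t := by intro t; ring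
    rw [Finset.prod_congr rfl (fun t _ => hstep t), hpoly (x - w₀), ← hw₀, hfL w₀, hfL x]
    have e1 : (x - w₀) ^ Q = x ^ Q + w₀ ^ Q := by rw [hsub, hfrobQ]
    linear_combination e1 + h2 (w₀ ^ Q) + h2 w₀ - h2 x
  -- conclusion
  refine ⟨Submodule.comap fL S, hfinrankW, ?_, ?_⟩
  · -- P1
    have hWne : Finset.univ.filter (fun w : F => w ∈ Submodule.comap fL S ∧ w ≠ 0)
        = (Finset.univ.filter (fun w : F => w ∈ Submodule.comap fL S)).erase 0 := by
      ext w
      simp only [Finset.mem_filter, Finset.mem_erase, Finset.mem_univ, true_and]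
      tauto
    have hmaps' : ∀ w ∈ (Finset.univ.filter
          (fun w : F => w ∈ Submodule.comap fL S)).erase 0,
        fL w ∈ Finset.univ.filter (fun y : F => y ∈ S) := by
      intro w hw
      exact hmaps w (Finset.mem_of_mem_erase hw)
    have hfib := Finset.prod_fiberwise_of_maps_to hmaps' (fun w => w)
    have hper : ∀ y ∈ Finset.univ.filter (fun y : F => y ∈ S),
        (∏ w ∈ ((Finset.univ.filter (fun w : F => w ∈ Submodule.comap fL S)).erase 0).filter
          (fun w => fL w = y), w) = if y = 0 then 1 else y := by
      intro y hy
      rw [Finset.mem_filter] at hy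
      by_cases hy0 : y = 0
      · subst hy0
        rw [if_pos rfl]
        have hseteq : ((Finset.univ.filter
            (fun w : F => w ∈ Submodule.comap fL S)).erase 0).filter
            (fun w => fL w = 0) = Finset.univ.filter (fun x : F => x ^ Q = x ∧ x ≠ 0) := by
          ext w
          simp only [Finset.mem_filter, Finset.mem_erase, Finset.mem_univ, true_and]
          constructor
          · rintro ⟨⟨hne, -⟩, hf⟩
            rw [hfL] at hf
            exact ⟨(hTiff w).mp hf, hne⟩
          · rintro ⟨hT, hne⟩
            exact ⟨⟨hne, hTW w hT⟩, by rw [hfL]; exact (hTiff w).mpr hT⟩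
        rw [hseteq]
        exact prod_filter_pow_eq_one h2 Q
      · rw [if_neg hy0]
        obtain ⟨w₀, hw₀⟩ := hpreim y hy.2
        have hsetne : ((Finset.univ.filter
            (fun w : F => w ∈ Submodule.comap fL S)).erase 0).filter
            (fun w => fL w = y) = Finset.univ.filter (fun w : F => fL w = y) := by
          ext w
          simp only [Finset.mem_filter, Finset.mem_erase, Finset.mem_univ, true_and]
          constructor
          · rintro ⟨⟨-, -⟩, hf⟩; exact hf
          · intro hf
            refine ⟨⟨?_, (hWmem w).mpr (by rw [hf]; exact hy.2)⟩, hf⟩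
            rintro rfl
            rw [map_zero] at hf
            exact hy0 hf.symm
        rw [hsetne, hfiberprod y w₀ hw₀ (fun w => w)]
        have hstep : ∀ t ∈ Finset.univ.filter (fun x : F => x ^ Q = x),
            w₀ + t = w₀ - t := fun t _ => (hsub w₀ t).symm
        rw [Finset.prod_congr rfl hstep, hpoly w₀, ← hw₀, hfL w₀, hsub (w₀ ^ Q) w₀]
    have h0S : (0:F) ∈ Finset.univ.filter (fun y : F => y ∈ S) :=
      Finset.mem_filter.mpr ⟨Finset.mem_univ _, S.zero_mem⟩
    have hτW : (∏ w ∈ Finset.univ.filter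
        (fun w : F => w ∈ Submodule.comap fL S ∧ w ≠ 0), w) = 1 := by
      rw [hWne, ← hfib, Finset.prod_congr rfl hper, ← Finset.mul_prod_erase _ _ h0S,
        if_pos rfl, one_mul]
      have hcongr : ∀ y ∈ (Finset.univ.filter (fun y : F => y ∈ S)).erase 0,
          (if y = 0 then (1:F) else y) = y := by
        intro y hy
        rw [if_neg (Finset.mem_erase.mp hy).1]
      rw [Finset.prod_congr rfl hcongr]
      rw [← hSτ]
      apply Finset.prod_congr _ (fun _ _ => rfl)
      ext w
      simp only [Finset.mem_filter, Finset.mem_erase, Finset.mem_univ, true_and]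
      tauto
    exact ⟨1, by rw [map_one, hτW]⟩
  · -- P2
    intro α
    have hLa := hH1 α
    have hLaT : (∏ w ∈ Finset.univ.filter (fun w : F => w ∈ Submodule.comap fL S),
        (α - w)) ^ Q = ∏ w ∈ Finset.univ.filter (fun w : F => w ∈ Submodule.comap fL S),
        (α - w) := by
      rw [hLa, ← Finset.prod_pow]
      apply Finset.prod_congr rfl
      intro y hy
      rw [Finset.mem_filter] at hy
      have hyT : y ^ Q = y := hST y hy.2
      rw [hsub, hfrobQ, himT, hyT, ← hsub]
    have hmemW : (∏ w ∈ Finset.univ.filter (fun w : F => w ∈ Submodule.comap fL S),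
        (α - w)) ∈ Submodule.comap fL S := by
      rw [hWmem, hfL, hLaT, h2]
      exact S.zero_mem
    exact Finset.prod_eq_zero (Finset.mem_filter.mpr ⟨Finset.mem_univ _, hmemW⟩) (sub_self _)
end

section
/- Let q be a prime power, 1 ≤ m ≤ ℓ, let W be an m-dimensional F_q-subspace of F_{q^ℓ}, and let L_W : F_{q^ℓ} → F_{q^ℓ} be the map α ↦ ∏_{w ∈ W}(α − w), whose kernel is W. Suppose γ_1, …, γ_m form an F_q-basis of W and γ_{m+1}, …, γ_ℓ ∈ F_{q^ℓ} satisfy the chain property L_W(γ_i) = γ_{i−m} for all m + 1 ≤ i ≤ ℓ. Then γ_1, …, γ_ℓ are linearly independent over F_q, i.e., they form an F_q-basis of F_{q^ℓ}. -/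
open scoped Classical

open Polynomial in
/-- The subspace polynomial map is `K`-linear. -/
theorem subspace_poly_linear {K F : Type*} [Field K] [Field F] [Fintype K] [Fintype F]
    [Algebra K F] (W : Submodule K F)
    (L : F → F) (hL : ∀ α : F, L α = ∏ w ∈ Finset.univ.filter (fun w : F => w ∈ W), (α - w)) :
    IsLinearMap K L := by
  classical
  set S : Finset F := Finset.univ.filter (fun w : F => w ∈ W) with hSdef
  have hSmem : ∀ w : F, w ∈ S ↔ w ∈ W := by
    intro w; simp [hSdef]
  set P : F[X] := ∏ w ∈ S, (X - C w) with hPdef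
  have hPeval : ∀ α : F, L α = P.eval α := by
    intro α; rw [hL α, hPdef, eval_prod]; simp
  have hPmonic : P.Monic := monic_prod_of_monic _ _ fun w _ => monic_X_sub_C w
  have hPdeg : P.natDegree = S.card := by
    rw [hPdef, natDegree_prod _ _ (fun w _ => X_sub_C_ne_zero w)]
    simp [natDegree_X_sub_C]
  have hScard_pos : 0 < S.card := Finset.card_pos.2 ⟨0, (hSmem 0).2 W.zero_mem⟩
  have hScard : S.card = Fintype.card K ^ Module.finrank K W := by
    rw [hSdef, ← Fintype.card_subtype]
    exact Module.card_eq_pow_finrank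
  -- translation invariance
  have htrans : ∀ w ∈ W, ∀ β : F, L (β + w) = L β := by
    intro w hw β
    rw [hL, hL]
    refine Finset.prod_nbij' (fun x => x - w) (fun x => x + w) ?_ ?_ ?_ ?_ ?_
    · intro x hx
      exact (hSmem _).2 (W.sub_mem ((hSmem x).1 hx) hw)
    · intro x hx
      exact (hSmem _).2 (W.add_mem ((hSmem x).1 hx) hw)
    · intro x _; ring
    · intro x _; ring
    · intro x _; ring
  -- additivity
  have hadd : ∀ a b : F, L (a + b) = L a + L b := by
    intro α β
    set g : F[X] := P.comp (X + C β) - P - C (L β) with hgdef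
    have hg0 : g = 0 := by
      apply eq_zero_of_natDegree_lt_card_of_eval_eq_zero' g S
      · intro w hw
        have hwW : w ∈ W := (hSmem w).1 hw
        have h1 : P.eval (w + β) = L (w + β) := (hPeval _).symm
        have h2 : P.eval w = 0 := by
          rw [← hPeval, hL]
          exact Finset.prod_eq_zero hw (by ring)
        have h3 : L (w + β) = L β := by rw [add_comm]; exact htrans w hwW β
        simp [hgdef, eval_comp, h1, h2, h3]
      · -- degree bound
        have hcomp : (P.comp (X + C β)).Monic := hPmonic.comp_X_add_C β
        have hd : (P.comp (X + C β)).natDegree = P.natDegree := by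
          rw [natDegree_comp]; simp
        have hP0 : P ≠ 0 := hPmonic.ne_zero
        have hdd : (P.comp (X + C β)).degree = P.degree := by
          rw [degree_eq_natDegree hcomp.ne_zero, degree_eq_natDegree hP0, hd]
        have hdeg1 : (P.comp (X + C β) - P).degree < P.degree := by
          rw [← hdd]
          exact degree_sub_lt hdd hcomp.ne_zero
            (by rw [hcomp.leadingCoeff, hPmonic.leadingCoeff])
        have hdeg2 : (C (L β)).degree < P.degree := by
          apply lt_of_le_of_lt degree_C_le
          rw [degree_eq_natDegree hP0]
          exact_mod_cast Nat.cast_pos.2 (by omega : 0 < P.natDegree)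
        have hdlt : g.degree < P.degree := by
          rw [hgdef]
          exact lt_of_le_of_lt (degree_sub_le _ _) (max_lt hdeg1 hdeg2)
        rw [← hPdeg]
        by_cases hgz : g = 0
        · rw [hgz]; simpa using (by omega : 0 < P.natDegree)
        · exact natDegree_lt_natDegree hgz hdlt
    have heval := congrArg (Polynomial.eval α) hg0
    simp only [hgdef, eval_sub, eval_comp, eval_add, eval_X, eval_C, eval_zero] at heval
    have h1 : P.eval (α + β) = L (α + β) := (hPeval _).symm
    have h2 : P.eval α = L α := (hPeval _).symm
    rw [h1, h2] at heval
    linear_combination heval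
  -- scalar multiplication
  have hsmul : ∀ (c : K) (a : F), L (c • a) = c • L a := by
    intro c α
    by_cases hc : c = 0
    · subst hc
      simp only [zero_smul]
      rw [hL]
      exact Finset.prod_eq_zero ((hSmem 0).2 W.zero_mem) (by ring)
    · rw [hL, hL]
      have hre : ∏ w ∈ S, (c • α - w) = ∏ w ∈ S, (c • α - c • w) := by
        refine Finset.prod_nbij' (fun x => c⁻¹ • x) (fun x => c • x) ?_ ?_ ?_ ?_ ?_
        · intro x hx; exact (hSmem _).2 (W.smul_mem c⁻¹ ((hSmem x).1 hx))
        · intro x hx; exact (hSmem _).2 (W.smul_mem c ((hSmem x).1 hx))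
        · intro x _; rw [smul_smul, mul_inv_cancel₀ hc, one_smul]
        · intro x _; rw [smul_smul, inv_mul_cancel₀ hc, one_smul]
        · intro x _; rw [smul_smul, mul_inv_cancel₀ hc, one_smul]
      rw [hre]
      have hdist : ∏ w ∈ S, (c • α - c • w) = ∏ w ∈ S, c • (α - w) :=
        Finset.prod_congr rfl fun w _ => (smul_sub c α w).symm
      rw [hdist]
      have hps : ∏ w ∈ S, c • (α - w) = (algebraMap K F c) ^ S.card * ∏ w ∈ S, (α - w) := by
        simp only [Algebra.smul_def]
        rw [Finset.prod_mul_distrib, Finset.prod_const]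
      rw [hps, ← map_pow, hScard, FiniteField.pow_card_pow, Algebra.smul_def]
  exact ⟨hadd, hsmul⟩

/-- Chain property: if `γ₀, …, γ_{m−1}` form an `F_q`-basis of the `m`-dimensional
subspace `W = ker L_W` and `γ_m, …, γ_{ℓ−1}` satisfy `L_W(γ_i) = γ_{i−m}`, then
`γ₀, …, γ_{ℓ−1}` are `F_q`-linearly independent, i.e. they form an `F_q`-basis of
`F_{q^ℓ}`. -/
theorem statement13 {K F : Type*} [Field K] [Field F] [Fintype K] [Fintype F] [Algebra K F]
    (q ℓ m : ℕ) (hq : Fintype.card K = q) (hℓ : Module.finrank K F = ℓ)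
    (hm1 : 1 ≤ m) (hmℓ : m ≤ ℓ)
    (W : Submodule K F) (hW : Module.finrank K W = m)
    (L : F → F) (hL : ∀ α : F, L α = ∏ w ∈ Finset.univ.filter (fun w : F => w ∈ W), (α - w))
    (hker : ∀ α : F, L α = 0 ↔ α ∈ W)
    (γ : ℕ → F)
    (hindep : LinearIndependent K (fun i : Fin m => γ i))
    (hspanW : Submodule.span K (Set.range fun i : Fin m => γ (i : ℕ)) = W)
    (hchain : ∀ i : ℕ, m ≤ i → i < ℓ → L (γ i) = γ (i - m)) :
    LinearIndependent K (fun i : Fin ℓ => γ (i : ℕ)) ∧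
      Submodule.span K (Set.range fun i : Fin ℓ => γ (i : ℕ)) = ⊤ := by
  classical
  have hlin : IsLinearMap K L := subspace_poly_linear W L hL
  let Lmap : F →ₗ[K] F := hlin.mk' L
  have hLmap : ∀ a, Lmap a = L a := fun a => rfl
  have hγW : ∀ i, i < m → γ i ∈ W := by
    intro i hi
    rw [← hspanW]
    exact Submodule.subset_span ⟨⟨i, hi⟩, rfl⟩
  -- main claim by strong induction
  have key : ∀ n, n ≤ ℓ → ∀ c : ℕ → K,
      (∑ i ∈ Finset.range n, c i • γ i) = 0 → ∀ i < n, c i = 0 := by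
    intro n
    induction n using Nat.strong_induction_on with
    | _ n IH =>
      intro hnℓ c hsum
      by_cases hnm : n ≤ m
      · -- restriction of hindep
        intro i hi
        have hfin := Fintype.linearIndependent_iff.1 hindep
          (fun j : Fin m => if (j : ℕ) < n then c j else 0)
        have hs : ∑ j : Fin m, (if (j : ℕ) < n then c (j : ℕ) else 0) • γ (j : ℕ) = 0 := by
          rw [← Finset.sum_range (fun j => (if j < n then c j else 0) • γ j)]
          rw [← Finset.sum_range_add_sum_Ico _ hnm]
          have h1 : ∑ i ∈ Finset.range n, (if i < n then c i else 0) • γ i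
              = ∑ i ∈ Finset.range n, c i • γ i := by
            apply Finset.sum_congr rfl
            intro i hi'
            rw [Finset.mem_range] at hi'
            simp [hi']
          have h2 : ∑ i ∈ Finset.Ico n m, (if i < n then c i else 0) • γ i = 0 := by
            apply Finset.sum_eq_zero
            intro i hi'
            rw [Finset.mem_Ico] at hi'
            simp [not_lt.2 hi'.1]
          rw [h1, h2, hsum, add_zero]
        have := hfin hs ⟨i, lt_of_lt_of_le hi hnm⟩
        simpa [hi] using this
      · push_neg at hnm
        have hnm' : m ≤ n := le_of_lt hnm
        -- apply L
        have happ : ∑ i ∈ Finset.range n, c i • L (γ i) = 0 := by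
          have h0 := congrArg Lmap hsum
          rw [map_sum, map_zero] at h0
          calc ∑ i ∈ Finset.range n, c i • L (γ i)
              = ∑ i ∈ Finset.range n, Lmap (c i • γ i) :=
                Finset.sum_congr rfl (fun i _ => by rw [map_smul, hLmap])
            _ = 0 := h0
        have hsplit : ∀ i ∈ Finset.range n, c i • L (γ i)
            = if i < m then 0 else c i • γ (i - m) := by
          intro i hi
          rw [Finset.mem_range] at hi
          by_cases him : i < m
          · have : L (γ i) = 0 := (hker _).2 (hγW i him)
            simp [him, this]
          · push_neg at him
            rw [hchain i him (lt_of_lt_of_le hi hnℓ)]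
            simp [not_lt.2 him]
        rw [Finset.sum_congr rfl hsplit] at happ
        have hsum2 : ∑ i ∈ Finset.Ico m n, c i • γ (i - m) = 0 := by
          rw [← Finset.sum_range_add_sum_Ico _ hnm'] at happ
          have h1 : ∑ i ∈ Finset.range m, (if i < m then (0:F) else c i • γ (i - m)) = 0 := by
            apply Finset.sum_eq_zero
            intro i hi
            rw [Finset.mem_range] at hi
            simp [hi]
          have h2 : ∑ i ∈ Finset.Ico m n, (if i < m then (0:F) else c i • γ (i - m))
              = ∑ i ∈ Finset.Ico m n, c i • γ (i - m) := by
            apply Finset.sum_congr rfl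
            intro i hi
            rw [Finset.mem_Ico] at hi
            simp [not_lt.2 hi.1]
          rw [h1, h2, zero_add] at happ
          exact happ
        rw [Finset.sum_Ico_eq_sum_range] at hsum2
        have hsum3 : ∑ i ∈ Finset.range (n - m), (fun j => c (m + j)) i • γ i = 0 := by
          rw [← hsum2]
          apply Finset.sum_congr rfl
          intro i _
          simp [Nat.add_sub_cancel_left]
        have hIH := IH (n - m) (by omega) (by omega) _ hsum3
        have hc_hi : ∀ i, m ≤ i → i < n → c i = 0 := by
          intro i h1 h2
          have := hIH (i - m) (by omega)
          rwa [Nat.add_sub_cancel' h1] at this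
        have hsum4 : ∑ i ∈ Finset.range m, c i • γ i = 0 := by
          rw [← Finset.sum_range_add_sum_Ico _ hnm'] at hsum
          have : ∑ i ∈ Finset.Ico m n, c i • γ i = 0 := by
            apply Finset.sum_eq_zero
            intro i hi
            rw [Finset.mem_Ico] at hi
            rw [hc_hi i hi.1 hi.2, zero_smul]
          rw [this, add_zero] at hsum
          exact hsum
        have hc_lo : ∀ i, i < m → c i = 0 := by
          have hfin := Fintype.linearIndependent_iff.1 hindep (fun j : Fin m => c j)
          have hs : ∑ j : Fin m, c (j : ℕ) • γ (j : ℕ) = 0 := by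
            rw [← Finset.sum_range (fun j => c j • γ j)]
            exact hsum4
          intro i hi
          exact hfin hs ⟨i, hi⟩
        intro i hi
        by_cases him : i < m
        · exact hc_lo i him
        · exact hc_hi i (by omega) hi
  have hli : LinearIndependent K (fun i : Fin ℓ => γ (i : ℕ)) := by
    rw [Fintype.linearIndependent_iff]
    intro c hc
    set d : ℕ → K := fun j => if h : j < ℓ then c ⟨j, h⟩ else 0 with hd
    have hsum : ∑ i ∈ Finset.range ℓ, d i • γ i = 0 := by
      rw [Finset.sum_range (fun j => d j • γ j), ← hc]
      apply Finset.sum_congr rfl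
      intro j _
      simp [hd, j.2]
    intro i
    have := key ℓ le_rfl d hsum i i.2
    simpa [hd, i.2] using this
  refine ⟨hli, ?_⟩
  have : Nonempty (Fin ℓ) := ⟨⟨0, by omega⟩⟩
  apply hli.span_eq_top_of_card_eq_finrank
  simp [hℓ]
end

section
/- Let p be a prime, q a power of p, and a ≥ b ≥ 1 integers. Set ℓ = q^a, m = q^b − 1, and t = q^{a mod b}. Then in the polynomial ring F_q[X] one has the identity (∑_{i=0}^{m} X^i)^{(ℓ−t)/m} = ∑_{j=0}^{ℓ/t − 1} X^{tj}. -/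
open scoped Classical

lemma geom_char {R : Type*} [CommRing R] [IsDomain R] (p : ℕ) [Fact p.Prime] [CharP R p]
    (x : R) (hx : x ≠ 1) (n : ℕ) :
    ∑ i ∈ Finset.range (p ^ n), x ^ i = (x - 1) ^ (p ^ n - 1) := by
  have hx' : x - 1 ≠ 0 := sub_ne_zero.mpr hx
  apply mul_right_cancel₀ hx'
  rw [geom_sum_mul, ← pow_succ, Nat.sub_add_cancel (Nat.one_le_pow _ _ (Fact.out (p := p.Prime)).pos)]
  rw [sub_pow_char_pow, one_pow]

/-- Polynomial identity in `F_q[X]`: with `ℓ = q^a`, `m = q^b − 1`, `t = q^{a mod b}`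
(`a ≥ b ≥ 1`), one has `(∑_{i=0}^{m} X^i)^{(ℓ−t)/m} = ∑_{j=0}^{ℓ/t − 1} X^{tj}`. -/
theorem statement15 {K : Type*} [Field K] [Fintype K]
    (p q a b ℓ m t : ℕ) (hp : p.Prime) (hq : ∃ s : ℕ, 1 ≤ s ∧ q = p ^ s)
    (hcard : Fintype.card K = q)
    (hab : b ≤ a) (hb : 1 ≤ b) (hℓ : ℓ = q ^ a) (hm : m = q ^ b - 1)
    (ht : t = q ^ (a % b)) :
    (∑ i ∈ Finset.range (m + 1), (Polynomial.X : Polynomial K) ^ i) ^ ((ℓ - t) / m) =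
      ∑ j ∈ Finset.range (ℓ / t), (Polynomial.X : Polynomial K) ^ (t * j) := by
  obtain ⟨s, hs1, hqs⟩ := hq
  haveI : Fact p.Prime := ⟨hp⟩
  -- characteristic of K is p
  haveI hK : CharP K p := by
    obtain ⟨p', hc⟩ := CharP.exists K
    obtain ⟨n, hp', hcard'⟩ := FiniteField.card K p'
    have hdvd : p ∣ p' ^ (n : ℕ) := by
      rw [← hcard', hcard, hqs]
      exact dvd_pow_self p (by omega)
    have := (Nat.prime_dvd_prime_iff_eq hp hp').mp (hp.dvd_of_dvd_pow hdvd)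
    rwa [this]
  haveI : CharP (Polynomial K) p := Polynomial.instCharP p
  have hq2 : 2 ≤ q := by
    rw [hqs]; exact hp.two_le.trans (Nat.le_self_pow (by omega) p)
  set r := a % b with hr
  have hrb : r < b := Nat.mod_lt _ (by omega)
  have hra : r ≤ a := le_trans hrb.le hab
  -- basic facts
  have hqb1 : 1 ≤ q ^ b := Nat.one_le_pow _ _ (by omega)
  have hm1 : m + 1 = q ^ b := by omega
  have harb : a - r = b * (a / b) := by
    have := Nat.div_add_mod a b
    rw [hr]; omega
  -- m ∣ ℓ - t
  have hℓt : ℓ - t = t * (q ^ (a - r) - 1) := by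
    rw [hℓ, ht, Nat.mul_sub, mul_one, ← pow_add]
    congr 2
    omega
  have hmdvd : m ∣ ℓ - t := by
    rw [hℓt, hm]
    apply Dvd.dvd.mul_left
    rw [harb, pow_mul]
    simpa using Nat.sub_dvd_pow_sub_pow (q ^ b) 1 (a / b)
  -- ℓ / t
  have htℓ : ℓ / t = q ^ (a - r) := by
    rw [hℓ, ht, Nat.pow_div hra (by omega)]
  -- express the relevant numbers as powers of p
  have hmb : m + 1 = p ^ (s * b) := by rw [hm1, hqs, pow_mul]
  have hℓtp : ℓ / t = p ^ (s * (a - r)) := by rw [htℓ, hqs, pow_mul]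
  have htp : t = p ^ (s * r) := by rw [ht, hqs, pow_mul]
  -- X ≠ 1 and X^t ≠ 1
  have hX : (Polynomial.X : Polynomial K) ≠ 1 := fun h => by simpa using congrArg Polynomial.natDegree h
  have hXt : (Polynomial.X : Polynomial K) ^ t ≠ 1 := by
    intro h
    have ht1 : 1 ≤ t := by rw [ht]; exact Nat.one_le_pow _ _ (by omega)
    have := congrArg Polynomial.natDegree h
    rw [Polynomial.natDegree_X_pow, Polynomial.natDegree_one] at this
    omega
  -- LHS
  have hLHS : (∑ i ∈ Finset.range (m + 1), (Polynomial.X : Polynomial K) ^ i) =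
      (Polynomial.X - 1) ^ m := by
    rw [hmb, geom_char p _ hX, ← hmb]
    simp
  -- RHS
  have hRHS : (∑ j ∈ Finset.range (ℓ / t), (Polynomial.X : Polynomial K) ^ (t * j)) =
      (Polynomial.X - 1) ^ (ℓ - t) := by
    have : ∀ j, (Polynomial.X : Polynomial K) ^ (t * j) = ((Polynomial.X : Polynomial K) ^ t) ^ j :=
      fun j => by rw [← pow_mul]
    simp_rw [this]
    rw [hℓtp, geom_char p _ hXt, ← hℓtp]
    have hXtsub : (Polynomial.X : Polynomial K) ^ t - 1 = (Polynomial.X - 1) ^ t := by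
      rw [htp, sub_pow_char_pow, one_pow]
    rw [hXtsub, ← pow_mul]
    congr 1
    have ht1 : 1 ≤ ℓ / t := by rw [htℓ]; exact Nat.one_le_pow _ _ (by omega)
    have htdvd : t ∣ ℓ := by rw [hℓ, ht]; exact pow_dvd_pow q hra
    rw [Nat.mul_sub, mul_one, Nat.mul_div_cancel' htdvd]
  rw [hLHS, hRHS, ← pow_mul, Nat.mul_div_cancel' hmdvd]
end

section
/- Let q be a prime power and a ≥ b ≥ 1 integers. Set ℓ = q^a, m = q^b − 1 with m > 1, and t = ℓ mod m. Regard F_{q^{m+1}} and F_{q^t} as subfields of F_{q^ℓ} (note m + 1 = q^b and t = q^{a mod b} both divide ℓ). Define σ : F_{q^ℓ} → F_{q^ℓ} by σ(x) = ∑_{i=0}^{m} x^{q^i}, and let W = {x ∈ F_{q^{m+1}} : σ(x) = 0} be the kernel in F_{q^{m+1}} of the trace from F_{q^{m+1}} to F_q. Then: (i) W is an F_q-subspace of F_{q^ℓ} of dimension m with ∏_{w ∈ W \ {0}} w = 1; (ii) F_{q^t} ⊆ W and the image of the ⌈(ℓ − m)/m⌉-fold iterate of σ equals F_{q^t}, so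 im(σ^{∘⌈(ℓ−m)/m⌉}) ∩ W has F_q-dimension at least t; (iii) W is contained in the image of the ⌊(ℓ − m)/m⌋-fold iterate of σ. -/
/-!
Let `T = Φ - 1`, where `Φ x = x ^ q` is the `F_q`-linear Frobenius of `F_{q^ℓ}`. Since `q` is a
power of the characteristic, `(X - 1) ^ (q ^ k) = X ^ (q ^ k) - 1` and
`(X - 1) ^ (q ^ k - 1) = ∑_{i < q ^ k} X ^ i`; hence `σ = T ^ m`, `T ^ ℓ = Φ ^ ℓ - 1 = 0`, and the
kernel of `T ^ (q ^ k)` is `F_{q^{q^k}}`. As `ker T = F_q` is a line, the nilpotent `T` is a single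
Jordan block: `ker (T ^ j)` has dimension `j` and `range (T ^ j) = ker (T ^ (ℓ - j))`. So
`W = ker (T ^ m)`, `F_{q^t} = ker (T ^ t)`, and the images of the iterates of `σ` are kernels of
powers of `T`, which are nested. The nonzero elements of `W` are the `q ^ m - 1` roots of the
monic `∑_{i ≤ m} X ^ (q ^ i - 1)`, whose constant term `1` is `(-1) ^ (q ^ m - 1) ∏ w`.
-/

open scoped Classical

open Module Polynomial Finset

/-- `(ℓ - m + m - 1) / m` is `⌈(ℓ - m) / m⌉` written in `ℕ`. -/
theorem Nat.sub_mul_sub_add_sub_one_div {ℓ m : ℕ} (h : 0 < ℓ % m) :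
    ℓ - m * ((ℓ - m + m - 1) / m) = ℓ % m := by
  rcases Nat.eq_zero_or_pos m with rfl | hm
  · simp
  rcases le_or_gt m ℓ with hmℓ | hℓm
  · have hlt := Nat.mod_lt ℓ hm
    have hdiv := Nat.div_add_mod ℓ m
    have hceil : (ℓ - m + m - 1) / m = ℓ / m := by
      refine Nat.div_eq_of_lt_le ?_ ?_
      · rw [mul_comm]; omega
      · rw [Nat.succ_mul, mul_comm]; omega
    rw [hceil]
    omega
  · rw [Nat.sub_eq_zero_of_le hℓm.le, zero_add, Nat.div_eq_of_lt (by omega), mul_zero,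
      Nat.mod_eq_of_lt hℓm, Nat.sub_zero]

theorem Nat.sub_mul_sub_div {ℓ m : ℕ} (hmℓ : m ≤ ℓ) : ℓ - m * ((ℓ - m) / m) = m + ℓ % m := by
  rcases Nat.eq_zero_or_pos m with rfl | hm
  · simp
  have hdiv := Nat.div_add_mod ℓ m
  have hm_le : m ≤ m * (ℓ / m) := Nat.le_mul_of_pos_right m (Nat.div_pos hmℓ hm)
  rw [show ℓ - m = ℓ - m * 1 by rw [mul_one], Nat.sub_mul_div, Nat.mul_sub_one]
  omega

theorem Nat.pow_mod_pow_sub_one {q a b : ℕ} (h : 1 < q ^ b - 1) :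
    q ^ a % (q ^ b - 1) = q ^ (a % b) := by
  have hb : 0 < b := Nat.pos_of_ne_zero (by rintro rfl; simp at h)
  have hq : 2 ≤ q := by
    rcases Nat.lt_or_ge 1 q with hq | hq
    · exact hq
    · interval_cases q <;> simp [hb.ne'] at h
  have hlt : q ^ (a % b) < q ^ b - 1 := by
    have hle : q ^ (a % b) ≤ q ^ (b - 1) :=
      Nat.pow_le_pow_right (by omega) (by have := Nat.mod_lt a hb; omega)
    have hdouble : q ^ (b - 1) * 2 ≤ q ^ b := by
      rw [← Nat.sub_add_cancel hb, pow_succ, Nat.add_sub_cancel]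
      exact Nat.mul_le_mul_left _ hq
    omega
  rw [← Nat.sub_add_cancel (Nat.one_le_pow a q (by omega)), Nat.add_mod,
    Nat.pow_sub_one_mod_pow_sub_one, Nat.one_mod_eq_one.mpr (by omega),
    Nat.sub_add_cancel (Nat.one_le_pow _ _ (by omega)), Nat.mod_eq_of_lt hlt]

namespace LinearMap

variable {K V₁ V₂ V₃ : Type*} [DivisionRing K] [AddCommGroup V₁] [Module K V₁]
  [AddCommGroup V₂] [Module K V₂] [AddCommGroup V₃] [Module K V₃]

theorem finrank_ker_comp_le [FiniteDimensional K V₁] [FiniteDimensional K V₂]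
    (f : V₂ →ₗ[K] V₃) (g : V₁ →ₗ[K] V₂) :
    finrank K (ker (f ∘ₗ g)) ≤ finrank K (ker f) + finrank K (ker g) := by
  set g' := g.domRestrict (ker (f ∘ₗ g))
  have hrange : range g' ≤ ker f := by
    rintro _ ⟨x, rfl⟩
    exact x.2
  have hker : (ker g').map (ker (f ∘ₗ g)).subtype ≤ ker g := by
    rintro _ ⟨x, hx, rfl⟩
    exact hx
  calc finrank K (ker (f ∘ₗ g)) = finrank K (range g') + finrank K (ker g') :=
        (finrank_range_add_finrank_ker g').symm
    _ ≤ finrank K (ker f) + finrank K (ker g) := by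
        gcongr
        · exact Submodule.finrank_mono hrange
        · rw [← Submodule.finrank_map_subtype_eq]
          exact Submodule.finrank_mono hker

end LinearMap

namespace Module.End

variable {K V : Type*} [DivisionRing K] [AddCommGroup V] [Module K V] (T : End K V)

theorem ker_pow_le_ker_pow {i j : ℕ} (h : i ≤ j) :
    LinearMap.ker (T ^ i) ≤ LinearMap.ker (T ^ j) := by
  obtain ⟨k, rfl⟩ := Nat.exists_eq_add_of_le' h
  rw [pow_add, mul_eq_comp]
  exact LinearMap.ker_le_ker_comp _ _

variable [FiniteDimensional K V]

theorem finrank_ker_pow_le (j : ℕ) :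
    finrank K (LinearMap.ker (T ^ j)) ≤ j * finrank K (LinearMap.ker T) := by
  induction j with
  | zero => simp [LinearMap.ker_id, one_eq_id]
  | succ j ih =>
    rw [pow_succ, mul_eq_comp, Nat.succ_mul]
    exact (LinearMap.finrank_ker_comp_le _ _).trans (by omega)

theorem finrank_ker_pow_eq_of_pow_finrank_eq_zero (hker : finrank K (LinearMap.ker T) ≤ 1)
    (hT : T ^ finrank K V = 0) {j : ℕ} (hj : j ≤ finrank K V) :
    finrank K (LinearMap.ker (T ^ j)) = j := by
  have hle (i : ℕ) : finrank K (LinearMap.ker (T ^ i)) ≤ i :=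
    (T.finrank_ker_pow_le i).trans (by nlinarith)
  have htop : finrank K (LinearMap.ker ((T ^ (finrank K V - j)) ∘ₗ (T ^ j))) = finrank K V := by
    rw [← mul_eq_comp, ← pow_add, Nat.sub_add_cancel hj, hT, LinearMap.ker_zero, finrank_top]
  have hsub := LinearMap.finrank_ker_comp_le (T ^ (finrank K V - j)) (T ^ j)
  have hle_j := hle j
  have hle_sub := hle (finrank K V - j)
  omega

theorem range_pow_eq_ker_pow_of_pow_finrank_eq_zero (hker : finrank K (LinearMap.ker T) ≤ 1)
    (hT : T ^ finrank K V = 0) (j : ℕ) :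
    LinearMap.range (T ^ j) = LinearMap.ker (T ^ (finrank K V - j)) := by
  rcases le_or_gt j (finrank K V) with hj | hj
  · refine Submodule.eq_of_le_of_finrank_eq ?_ ?_
    · rw [LinearMap.range_le_ker_iff, ← mul_eq_comp, ← pow_add, Nat.sub_add_cancel hj, hT]
    · have hrank := LinearMap.finrank_range_add_finrank_ker (T ^ j)
      rw [T.finrank_ker_pow_eq_of_pow_finrank_eq_zero hker hT hj] at hrank
      rw [T.finrank_ker_pow_eq_of_pow_finrank_eq_zero hker hT (Nat.sub_le _ _)]
      omega
  · rw [Nat.sub_eq_zero_of_le hj.le, ← Nat.sub_add_cancel hj.le, pow_add, hT, mul_zero,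
      LinearMap.range_zero, pow_zero, one_eq_id, LinearMap.ker_id]

end Module.End

theorem Submodule.card_filter_mem_and_ne_zero {K V : Type*} [Field K] [Fintype K]
    [AddCommGroup V] [Module K V] [Fintype V] (W : Submodule K V) :
    #(univ.filter fun v => v ∈ W ∧ v ≠ 0) = Fintype.card K ^ finrank K W - 1 := by
  rw [← filter_filter, filter_ne', card_erase_of_mem (by simp [W.zero_mem]),
    ← Fintype.card_subtype (· ∈ W), card_eq_pow_finrank (K := K) (V := W)]

namespace Polynomial

variable {R : Type*} [CommRing R] [IsDomain R]

theorem Monic.coeff_zero_eq_prod_of_card_eq {P : R[X]} (hP : P.Monic) {s : Finset R}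
    (hs : ∀ x ∈ s, P.IsRoot x) (hcard : #s = P.natDegree) :
    P.coeff 0 = (-1) ^ #s * ∏ x ∈ s, x := by
  have hroots : s.val = P.roots := by
    refine Multiset.eq_of_le_of_card_le ((Multiset.le_iff_subset s.nodup).mpr
      fun x hx => (mem_roots hP.ne_zero).mpr (hs x hx)) ?_
    exact (card_roots' P).trans hcard.ge
  have hsplits : P.Splits := splits_iff_card_roots.mpr (hroots ▸ hcard)
  rw [hsplits.coeff_zero_eq_prod_roots_of_monic hP, ← hroots, hcard, prod_eq_multiset_prod,
    Multiset.map_id']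

theorem monic_sum_X_pow_pow_sub_one {q : ℕ} (hq : 1 < q) (m : ℕ) :
    (∑ i ∈ range (m + 1), (X : R[X]) ^ (q ^ i - 1)).Monic ∧
      (∑ i ∈ range (m + 1), (X : R[X]) ^ (q ^ i - 1)).natDegree = q ^ m - 1 := by
  have hlt : (∑ i ∈ range m, (X : R[X]) ^ (q ^ i - 1)).degree < ↑(q ^ m - 1) := by
    refine (degree_sum_le _ _).trans_lt ((Finset.sup_lt_iff (WithBot.bot_lt_coe _)).mpr ?_)
    intro i hi
    rw [degree_X_pow, Nat.cast_lt]
    have hpow_lt := Nat.pow_lt_pow_right hq (mem_range.mp hi)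
    have hpow_pos := Nat.one_le_pow i q (by omega)
    omega
  rw [sum_range_succ, add_comm]
  refine ⟨monic_X_pow_add hlt, ?_⟩
  rw [natDegree_add_eq_left_of_degree_lt (by rwa [degree_X_pow]), natDegree_X_pow]

end Polynomial

namespace FiniteField

variable (K F : Type*) [Field K] [Fintype K] [Field F] [Algebra K F]

local notation "q" => Fintype.card K

theorem X_sub_one_pow_card_pow (k : ℕ) : (X - 1 : K[X]) ^ q ^ k = X ^ q ^ k - 1 := by
  obtain ⟨p, _, n, hp, hq⟩ := card' K
  have : Fact p.Prime := ⟨hp⟩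
  rw [hq, ← pow_mul, sub_pow_char_pow, one_pow]

theorem X_sub_one_pow_card_pow_sub_one (k : ℕ) :
    (X - 1 : K[X]) ^ (q ^ k - 1) = ∑ i ∈ range (q ^ k), X ^ i := by
  refine mul_left_cancel₀ (X_sub_C_ne_zero 1) ?_
  rw [C_1, ← pow_succ', Nat.sub_add_cancel (Nat.one_le_pow _ _ Fintype.card_pos),
    X_sub_one_pow_card_pow, mul_geom_sum]

noncomputable def frobeniusSubOne : End K F := (frobeniusAlgHom K F).toLinearMap - 1

theorem frobeniusAlgHom_toLinearMap_pow_apply (j : ℕ) (x : F) :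
    ((frobeniusAlgHom K F).toLinearMap ^ j) x = x ^ q ^ j := by
  rw [End.pow_apply, AlgHom.coe_toLinearMap, coe_frobeniusAlgHom, pow_iterate]

theorem frobeniusSubOne_pow_card_pow (k : ℕ) :
    frobeniusSubOne K F ^ q ^ k = (frobeniusAlgHom K F).toLinearMap ^ q ^ k - 1 := by
  rw [frobeniusSubOne]
  simpa using congrArg (aeval (frobeniusAlgHom K F).toLinearMap) (X_sub_one_pow_card_pow K k)

theorem mem_ker_frobeniusSubOne_pow_card_pow {k : ℕ} {x : F} :
    x ∈ LinearMap.ker (frobeniusSubOne K F ^ q ^ k) ↔ x ^ q ^ q ^ k = x := by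
  rw [frobeniusSubOne_pow_card_pow, LinearMap.mem_ker, LinearMap.sub_apply, End.one_apply,
    frobeniusAlgHom_toLinearMap_pow_apply, sub_eq_zero]

theorem frobeniusSubOne_pow_card_pow_sub_one_apply (k : ℕ) (x : F) :
    (frobeniusSubOne K F ^ (q ^ k - 1)) x = ∑ i ∈ range (q ^ k), x ^ q ^ i := by
  have := congrArg (aeval (frobeniusAlgHom K F).toLinearMap) (X_sub_one_pow_card_pow_sub_one K k)
  simp only [map_pow, map_sub, aeval_X, map_one, map_sum] at this
  rw [frobeniusSubOne, this, LinearMap.sum_apply]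
  simp only [frobeniusAlgHom_toLinearMap_pow_apply]

theorem mem_ker_frobeniusSubOne_pow_card_pow_sub_one {k : ℕ} {x : F} :
    x ∈ LinearMap.ker (frobeniusSubOne K F ^ (q ^ k - 1)) ↔
      x ^ q ^ q ^ k = x ∧ ∑ i ∈ range (q ^ k), x ^ q ^ i = 0 := by
  rw [← mem_ker_frobeniusSubOne_pow_card_pow, ← frobeniusSubOne_pow_card_pow_sub_one_apply]
  exact ⟨fun h => ⟨(frobeniusSubOne K F).ker_pow_le_ker_pow (Nat.sub_le _ _) h, h⟩, And.right⟩

theorem frobeniusSubOne_pow_finrank_eq_zero [Finite F] {k : ℕ} (h : finrank K F = q ^ k) :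
    frobeniusSubOne K F ^ finrank K F = 0 := by
  have : Fintype F := Fintype.ofFinite F
  ext x
  rw [LinearMap.zero_apply, ← LinearMap.mem_ker, h, mem_ker_frobeniusSubOne_pow_card_pow, ← h,
    ← card_eq_pow_finrank, pow_card]

theorem finrank_ker_frobeniusSubOne_le_one [Finite F] :
    finrank K (LinearMap.ker (frobeniusSubOne K F)) ≤ 1 := by
  have : Fintype F := Fintype.ofFinite F
  have hq : 1 < q := Fintype.one_lt_card
  have hroots : (LinearMap.ker (frobeniusSubOne K F) : Set F).toFinset.val ⊆
      (X ^ q - X : F[X]).roots := by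
    intro x hx
    have hx : x ^ q = x := by
      simpa using (mem_ker_frobeniusSubOne_pow_card_pow K F (k := 0)).mp (by simpa using hx)
    rw [mem_roots (X_pow_card_sub_X_ne_zero F hq), IsRoot, eval_sub, eval_pow, eval_X, hx,
      sub_self]
  have hcard := card_le_degree_of_subset_roots hroots
  rw [X_pow_card_sub_X_natDegree_eq F hq, ← Nat.card_eq_card_toFinset, SetLike.coe_sort_coe,
    natCard_eq_pow_finrank (K := K), Nat.card_eq_fintype_card] at hcard
  exact (pow_le_pow_iff_right₀ hq).mp (hcard.trans_eq (pow_one q).symm)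

theorem finrank_ker_frobeniusSubOne_pow [Finite F] {k : ℕ} (h : finrank K F = q ^ k) {j : ℕ}
    (hj : j ≤ finrank K F) : finrank K (LinearMap.ker (frobeniusSubOne K F ^ j)) = j :=
  (frobeniusSubOne K F).finrank_ker_pow_eq_of_pow_finrank_eq_zero
    (finrank_ker_frobeniusSubOne_le_one K F) (frobeniusSubOne_pow_finrank_eq_zero K F h) hj

theorem range_frobeniusSubOne_pow [Finite F] {k : ℕ} (h : finrank K F = q ^ k) (j : ℕ) :
    LinearMap.range (frobeniusSubOne K F ^ j) =
      LinearMap.ker (frobeniusSubOne K F ^ (finrank K F - j)) :=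
  (frobeniusSubOne K F).range_pow_eq_ker_pow_of_pow_finrank_eq_zero
    (finrank_ker_frobeniusSubOne_le_one K F) (frobeniusSubOne_pow_finrank_eq_zero K F h) j

theorem neg_one_pow_card_pow_sub_one (k : ℕ) : (-1 : F) ^ (q ^ k - 1) = 1 := by
  obtain ⟨c, hc⟩ : q - 1 ∣ q ^ k - 1 := by simpa using Nat.sub_dvd_pow_sub_pow q 1 k
  rw [hc, pow_mul, ← map_one (algebraMap K F), ← map_neg, ← map_pow,
    pow_card_sub_one_eq_one _ (neg_ne_zero.mpr one_ne_zero), ← map_pow, one_pow]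

theorem prod_eq_one_of_card_eq {m : ℕ} {s : Finset F}
    (hs : ∀ w ∈ s, w ≠ 0 ∧ ∑ i ∈ range (m + 1), w ^ q ^ i = 0) (hcard : #s = q ^ m - 1) :
    ∏ w ∈ s, w = 1 := by
  have hq : 1 < q := Fintype.one_lt_card
  set S : F[X] := ∑ i ∈ range (m + 1), X ^ (q ^ i - 1)
  obtain ⟨hmonic, hdeg⟩ := monic_sum_X_pow_pow_sub_one (R := F) hq m
  have hroot (w : F) (hw : w ∈ s) : S.IsRoot w := by
    obtain ⟨hw0, hσ⟩ := hs w hw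
    refine (mul_eq_zero.mp ?_).resolve_left hw0
    rw [← hσ, eval_finsetSum, mul_sum]
    refine sum_congr rfl fun i _ => ?_
    rw [eval_pow, eval_X, ← pow_succ', Nat.sub_add_cancel (Nat.one_le_pow _ _ Fintype.card_pos)]
  have hcoeff : S.coeff 0 = 1 := by
    rw [finsetSum_coeff, sum_eq_single_of_mem 0 (mem_range.mpr m.succ_pos)]
    · simp
    · intro i _ hi
      rw [coeff_X_pow, if_neg]
      have hpow := Nat.one_lt_pow hi hq
      omega
  have hprod := hmonic.coeff_zero_eq_prod_of_card_eq hroot (hcard.trans hdeg.symm)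
  rwa [hcoeff, hcard, neg_one_pow_card_pow_sub_one K, one_mul, eq_comm] at hprod

theorem prod_filter_mem_and_ne_zero_eq_one [Fintype F] (W : Submodule K F)
    (hW : ∀ w ∈ W, ∑ i ∈ range (finrank K W + 1), w ^ q ^ i = 0) :
    ∏ w ∈ univ.filter (fun w => w ∈ W ∧ w ≠ 0), w = 1 := by
  refine prod_eq_one_of_card_eq K F (fun w hw => ?_) W.card_filter_mem_and_ne_zero
  obtain ⟨hwW, hw0⟩ := (mem_filter.mp hw).2
  exact ⟨hw0, hW w hwW⟩

end FiniteField

theorem statement17_general {K F : Type*} [Field K] [Field F] [Fintype K] [Fintype F] [Algebra K F]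
    (q a b ℓ m t : ℕ) (hq : Fintype.card K = q) (hab : b ≤ a)
    (hℓ : ℓ = q ^ a) (hm : m = q ^ b - 1) (hm1 : 1 < m) (ht : t = ℓ % m)
    (hdim : Module.finrank K F = ℓ)
    (σ : F → F) (hσ : ∀ x : F, σ x = ∑ i ∈ Finset.range (m + 1), x ^ q ^ i) :
    (∃ Wsub : Submodule K F,
        (Wsub : Set F) = {x : F | x ^ q ^ (m + 1) = x ∧ σ x = 0} ∧
        Module.finrank K Wsub = m) ∧
    (∏ w ∈ Finset.univ.filter
        (fun w : F => (w ^ q ^ (m + 1) = w ∧ σ w = 0) ∧ w ≠ 0), w) = 1 ∧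
    {x : F | x ^ q ^ t = x} ⊆ {x : F | x ^ q ^ (m + 1) = x ∧ σ x = 0} ∧
    Set.range (σ^[(ℓ - m + m - 1) / m]) = {x : F | x ^ q ^ t = x} ∧
    t ≤ Module.finrank K (Submodule.span K
        (Set.range (σ^[(ℓ - m + m - 1) / m]) ∩
          {x : F | x ^ q ^ (m + 1) = x ∧ σ x = 0})) ∧
    {x : F | x ^ q ^ (m + 1) = x ∧ σ x = 0} ⊆ Set.range (σ^[(ℓ - m) / m]) := by
  subst hq
  set T := FiniteField.frobeniusSubOne K F
  have hdimq : finrank K F = Fintype.card K ^ a := hdim.trans hℓ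
  have hmb : m + 1 = Fintype.card K ^ b := by omega
  have hσT : σ = ⇑(T ^ m) := funext fun x => by
    rw [hσ, hmb, hm, FiniteField.frobeniusSubOne_pow_card_pow_sub_one_apply]
  have hWmem (x : F) :
      (x ^ Fintype.card K ^ (m + 1) = x ∧ σ x = 0) ↔ x ∈ LinearMap.ker (T ^ m) := by
    rw [hσ, hmb, hm, FiniteField.mem_ker_frobeniusSubOne_pow_card_pow_sub_one]
  have hW : {x : F | x ^ Fintype.card K ^ (m + 1) = x ∧ σ x = 0} = LinearMap.ker (T ^ m) :=
    Set.ext hWmem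
  have htq : t = Fintype.card K ^ (a % b) := by
    rw [ht, hℓ, hm, Nat.pow_mod_pow_sub_one (hm ▸ hm1)]
  have hE : {x : F | x ^ Fintype.card K ^ t = x} = LinearMap.ker (T ^ t) :=
    Set.ext fun x => htq ▸ (FiniteField.mem_ker_frobeniusSubOne_pow_card_pow K F).symm
  have hrange (k : ℕ) : Set.range (σ^[k]) = LinearMap.ker (T ^ (ℓ - m * k)) := by
    rw [hσT, ← Module.End.coe_pow, ← pow_mul, ← LinearMap.coe_range,
      FiniteField.range_frobeniusSubOne_pow K F hdimq, hdim]
  have hfinrank (j : ℕ) (hj : j ≤ ℓ) : finrank K (LinearMap.ker (T ^ j)) = j :=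
    FiniteField.finrank_ker_frobeniusSubOne_pow K F hdimq (hdim ▸ hj)
  have hmℓ : m ≤ ℓ := hm ▸ hℓ ▸ (Nat.sub_le _ _).trans (Nat.pow_le_pow_right Fintype.card_pos hab)
  have htpos : 0 < ℓ % m := by rw [← ht, htq]; positivity
  have htm : t < m := ht ▸ Nat.mod_lt ℓ (by omega)
  have hEW : LinearMap.ker (T ^ t) ≤ LinearMap.ker (T ^ m) := T.ker_pow_le_ker_pow htm.le
  have hceil : Set.range (σ^[(ℓ - m + m - 1) / m]) = LinearMap.ker (T ^ t) := by
    rw [hrange, Nat.sub_mul_sub_add_sub_one_div htpos, ← ht]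
  refine ⟨⟨LinearMap.ker (T ^ m), hW.symm, hfinrank m hmℓ⟩, ?_, hE ▸ hW ▸ hEW,
    hceil.trans hE.symm, ?_, ?_⟩
  · rw [filter_congr fun w _ => and_congr_left' (hWmem w)]
    refine FiniteField.prod_filter_mem_and_ne_zero_eq_one K F _ fun w hw => ?_
    rw [hfinrank m hmℓ, ← hσ, hσT]
    exact hw
  · rw [hceil, hW, Set.inter_eq_left.mpr hEW, Submodule.span_eq, hfinrank t (by omega)]
  · rw [hW, hrange, Nat.sub_mul_sub_div hmℓ, ← ht]
    exact T.ker_pow_le_ker_pow (Nat.le_add_right m t)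

/-- With `ℓ = q^a`, `m = q^b − 1 > 1`, `t = ℓ mod m`, let `σ(x) = ∑_{i=0}^{m} x^{q^i}` on
`F_{q^ℓ}` and let `W` be the kernel in `F_{q^{m+1}} = {x : x^{q^{m+1}} = x}` of the trace
to `F_q`. Then (i) `W` is an `F_q`-subspace of dimension `m` with `∏_{w ∈ W\{0}} w = 1`;
(ii) `F_{q^t} ⊆ W`, the image of the `⌈(ℓ−m)/m⌉`-fold iterate of `σ` equals
`F_{q^t} = {x : x^{q^t} = x}`, and `im(σ^{∘⌈(ℓ−m)/m⌉}) ∩ W` has `F_q`-dimension at least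
`t`; (iii) `W` is contained in the image of the `⌊(ℓ−m)/m⌋`-fold iterate of `σ`. -/
theorem statement17 {K F : Type*} [Field K] [Field F] [Fintype K] [Fintype F] [Algebra K F]
    (q a b ℓ m t : ℕ) (hq : Fintype.card K = q) (hab : b ≤ a) (hb : 1 ≤ b)
    (hℓ : ℓ = q ^ a) (hm : m = q ^ b - 1) (hm1 : 1 < m) (ht : t = ℓ % m)
    (hdim : Module.finrank K F = ℓ)
    (σ : F → F) (hσ : ∀ x : F, σ x = ∑ i ∈ Finset.range (m + 1), x ^ q ^ i) :
    (∃ Wsub : Submodule K F,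
        (Wsub : Set F) = {x : F | x ^ q ^ (m + 1) = x ∧ σ x = 0} ∧
        Module.finrank K Wsub = m) ∧
    (∏ w ∈ Finset.univ.filter
        (fun w : F => (w ^ q ^ (m + 1) = w ∧ σ w = 0) ∧ w ≠ 0), w) = 1 ∧
    {x : F | x ^ q ^ t = x} ⊆ {x : F | x ^ q ^ (m + 1) = x ∧ σ x = 0} ∧
    Set.range (σ^[(ℓ - m + m - 1) / m]) = {x : F | x ^ q ^ t = x} ∧
    t ≤ Module.finrank K (Submodule.span K
        (Set.range (σ^[(ℓ - m + m - 1) / m]) ∩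
          {x : F | x ^ q ^ (m + 1) = x ∧ σ x = 0})) ∧
    {x : F | x ^ q ^ (m + 1) = x ∧ σ x = 0} ⊆ Set.range (σ^[(ℓ - m) / m]) :=
  statement17_general q a b ℓ m t hq hab hℓ hm hm1 ht hdim σ hσ
end
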